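/- arXiv:0910.1585 — 7 statements merged into one kernel-verified Lean document; each statement's English description precedes it below -/
import Mathlib

section
/- Consider an interaction system with n nodes in which every node i has a deterministic, historyless, self-independent reaction function g_i : A → A_i. If there exist two distinct stable states (two distinct profiles a ≠ b with g_i(a) = a_i and g_i(b) = b_i for all i), then the system is not convergent: there exist an initial profile s⁰ and a fair schedule σ such that the (s⁰,σ)-dynamics is not eventually constant. -/
/-- A schedule `σ` is fair if every node is activated infinitely often. -/
def Fair {n : ℕ} (σ : ℕ → Finset (Fin n)) : Prop :=
  ∀ i : Fin n, ∀ N : ℕ, ∃ t, N ≤ t ∧ i ∈ σ t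

/-- A schedule is `r`-fair if every node is activated at least once in every
`r` consecutive time steps. -/
def RFair {n : ℕ} (r : ℕ) (σ : ℕ → Finset (Fin n)) : Prop :=
  ∀ i : Fin n, ∀ t0 : ℕ, ∃ t, t0 ≤ t ∧ t < t0 + r ∧ i ∈ σ t

/-- A (deterministic, historyless) reaction function is self-independent if
it does not depend on node `i`'s own action. -/
def SelfIndependent {n : ℕ} {A : Fin n → Type*} (i : Fin n)
    (g : (∀ j, A j) → A i) : Prop :=
  ∀ a b : ∀ j, A j, (∀ j, j ≠ i → a j = b j) → g a = g b

/-- A stable state is a fixed point of all reaction functions. -/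
def Stable {n : ℕ} {A : Fin n → Type*}
    (g : ∀ i : Fin n, (∀ j, A j) → A i) (a : ∀ j, A j) : Prop :=
  ∀ i, g i a = a i

/-- The `(s0, σ)`-dynamics of a system of deterministic historyless reaction
functions: at each time step, each activated node reacts to the current
profile and the other nodes repeat their previous action. -/
def dynamics {n : ℕ} {A : Fin n → Type*}
    (g : ∀ i : Fin n, (∀ j, A j) → A i) (s0 : ∀ j, A j)
    (σ : ℕ → Finset (Fin n)) : ℕ → ∀ j, A j
  | 0 => s0
  | t + 1 => fun i =>
      if i ∈ σ (t + 1) then g i (dynamics g s0 σ t) else dynamics g s0 σ t i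

/-- A sequence converges if it is eventually constant. -/
def EventuallyConstant {α : Type*} (s : ℕ → α) : Prop :=
  ∃ t0 : ℕ, ∀ t, t0 ≤ t → s t = s t0

/-- The system is convergent if the dynamics converges for every initial
profile and every fair schedule. -/
def Convergent {n : ℕ} {A : Fin n → Type*}
    (g : ∀ i : Fin n, (∀ j, A j) → A i) : Prop :=
  ∀ (s0 : ∀ j, A j) (σ : ℕ → Finset (Fin n)),
    (∀ t, (σ t).Nonempty) → Fair σ → EventuallyConstant (dynamics g s0 σ)

/-- The system is `r`-convergent if the dynamics converges for every initial
profile and every `r`-fair schedule. -/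
def RConvergent {n : ℕ} {A : Fin n → Type*} (r : ℕ)
    (g : ∀ i : Fin n, (∀ j, A j) → A i) : Prop :=
  ∀ (s0 : ∀ j, A j) (σ : ℕ → Finset (Fin n)),
    (∀ t, (σ t).Nonempty) → RFair r σ → EventuallyConstant (dynamics g s0 σ)

/-!
This is the valency argument of Fischer, Lynch and Paterson. If the system converged, every
profile would reach a stable state by activating one node at a time (follow a round-robin
schedule), so its *valence*, the set of stable states so reachable, would be nonempty.

By self-independence, two profiles differing only at node `i` become equal once `i` is activated,
so they share a stable outcome; changing `a` into `b` one coordinate at a time therefore passes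
through a bivalent profile. From a bivalent profile and any node `i`, some profile reached by
single activations becomes bivalent again when `i` (possibly together with one more node) is
activated: otherwise, walking backwards along a path to a stable state other than the outcome of
activating `i` at once, the square formed by activating `i`, `j`, or both transmits univalence.
Chaining such paths yields a fair schedule that visits bivalent profiles forever, whereas a
converging dynamics ends in a stable, hence univalent, profile.
-/

theorem List.exists_seq_flatten {α : Type*} (w : ℕ → List α) (hw : ∀ k, w k ≠ []) :
    ∃ (f : ℕ → α) (T : ℕ → ℕ), T 0 = 0 ∧ (∀ k, T (k + 1) = T k + (w k).length) ∧
      (∀ k, k ≤ T k) ∧ (∀ k m (hm : m < (w k).length), f (T k + m) = (w k)[m]) ∧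
      ∀ p, ∃ k, f p ∈ w k := by
  set L : ℕ → List α := fun k => ((List.range k).map w).flatten with hLdef
  have hL : ∀ k, L (k + 1) = L k ++ w k := by simp [hLdef, List.range_succ]
  have hT : ∀ k, k ≤ (L k).length := by
    intro k
    induction k with
    | zero => simp
    | succ k ih => rw [hL, List.length_append]; have := List.length_pos_iff.2 (hw k); omega
  have hpre : ∀ {k k'}, k ≤ k' → L k <+: L k' := by
    intro k k' hk
    induction k', hk using Nat.le_induction with
    | base => exact List.prefix_refl _
    | succ k' _ ih => exact ih.trans (hL k' ▸ List.prefix_append _ _)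
  refine ⟨fun p => (L (p + 1))[p]'(by have := hT (p + 1); omega), fun k => (L k).length,
    by simp [hLdef], by simp [hL], hT, fun k m hm => ?_, fun p => ?_⟩
  · have hlt : (L k).length + m < (L (k + 1)).length := by simp [hL, hm]
    dsimp only
    rw [← (hpre (by have := hT k; omega : k + 1 ≤ (L k).length + m + 1)).getElem hlt]
    simp only [hL, List.getElem_append_right (Nat.le_add_right _ _), Nat.add_sub_cancel_left]
  · obtain ⟨l, hl, hmem⟩ := List.mem_flatten.1 (List.getElem_mem (l := L (p + 1)) (n := p) _)
    obtain ⟨k, -, rfl⟩ := List.mem_map.1 hl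
    exact ⟨k, hmem⟩

theorem fair_singleton_ofNat (n : ℕ) [NeZero n] : Fair fun t => {Fin.ofNat n t} := by
  intro i N
  refine ⟨i + n * N, ?_, ?_⟩
  · have := Nat.le_mul_of_pos_left N (Nat.pos_of_neZero n)
    omega
  · simp [Fin.ext_iff, Nat.mod_eq_of_lt i.isLt]

namespace InteractionSystem

variable {n : ℕ} {A : Fin n → Type*}

def step (g : ∀ i : Fin n, (∀ j, A j) → A i) (S : Finset (Fin n)) (s : ∀ j, A j) : ∀ j, A j :=
  fun i => if i ∈ S then g i s else s i

def run (g : ∀ i : Fin n, (∀ j, A j) → A i) (w : List (Finset (Fin n))) (s : ∀ j, A j) :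
    ∀ j, A j :=
  w.foldl (fun s S => step g S s) s

def Reaches (g : ∀ i : Fin n, (∀ j, A j) → A i) : (∀ j, A j) → (∀ j, A j) → Prop :=
  Relation.ReflTransGen fun s t => ∃ i, t = step g {i} s

def valence (g : ∀ i : Fin n, (∀ j, A j) → A i) (s : ∀ j, A j) : Set (∀ j, A j) :=
  {x | Stable g x ∧ Reaches g s x}

abbrev Bivalent (g : ∀ i : Fin n, (∀ j, A j) → A i) (s : ∀ j, A j) : Prop :=
  (valence g s).Nontrivial

variable {g : ∀ i : Fin n, (∀ j, A j) → A i} {s t u v x y : ∀ j, A j}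

theorem step_apply_of_notMem {S : Finset (Fin n)} {j : Fin n} (hj : j ∉ S) :
    step g S s j = s j := if_neg hj

theorem dynamics_succ (σ : ℕ → Finset (Fin n)) (k : ℕ) :
    dynamics g s σ (k + 1) = step g (σ (k + 1)) (dynamics g s σ k) := rfl

theorem run_append (w w' : List (Finset (Fin n))) :
    run g (w ++ w') s = run g w' (run g w s) :=
  List.foldl_append ..

theorem dynamics_add (σ : ℕ → Finset (Fin n)) (k m : ℕ) :
    dynamics g s σ (k + m) =
      run g ((List.range m).map fun j => σ (k + j + 1)) (dynamics g s σ k) := by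
  induction m with
  | zero => rfl
  | succ m ih =>
    rw [← add_assoc, dynamics_succ, ih, List.range_succ, List.map_append, run_append]
    rfl

theorem dynamics_add_length {σ : ℕ → Finset (Fin n)} {k : ℕ} {w : List (Finset (Fin n))}
    (hσ : ∀ m (hm : m < w.length), σ (k + m + 1) = w[m]) :
    dynamics g s σ (k + w.length) = run g w (dynamics g s σ k) := by
  rw [dynamics_add]
  congr 1
  exact List.ext_getElem (by simp) fun m _ hm => by simp [hσ m hm]

theorem Stable.step_eq (hx : Stable g x) (S : Finset (Fin n)) : step g S x = x := by
  funext i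
  by_cases hi : i ∈ S <;> simp [step, hi, hx i]

theorem Stable.eq_of_reaches (hx : Stable g x) (h : Reaches g x y) : y = x := by
  induction h with
  | refl => rfl
  | tail _ hst ih => obtain ⟨i, rfl⟩ := hst; rw [ih, Stable.step_eq hx]

theorem Stable.valence_eq (hx : Stable g x) : valence g x = {x} :=
  Set.ext fun _ => ⟨fun hy => Stable.eq_of_reaches hx hy.2, by rintro rfl; exact ⟨hx, .refl⟩⟩

theorem Stable.not_bivalent (hx : Stable g x) : ¬ Bivalent g x := by
  simp [Stable.valence_eq hx]

theorem Reaches.step (i : Fin n) : Reaches g s (step g {i} s) :=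
  .single ⟨i, rfl⟩

theorem Reaches.exists_run (h : Reaches g s t) :
    ∃ w : List (Finset (Fin n)), (∀ S ∈ w, S.Nonempty) ∧ run g w s = t := by
  induction h using Relation.ReflTransGen.head_induction_on with
  | refl => exact ⟨[], by simp, rfl⟩
  | head hst _ ih =>
    obtain ⟨i, rfl⟩ := hst
    obtain ⟨w, hw, hrun⟩ := ih
    exact ⟨{i} :: w, by simpa using hw, hrun⟩

theorem reaches_dynamics_singleton (ν : ℕ → Fin n) (k : ℕ) :
    Reaches g s (dynamics g s (fun t => {ν t}) k) := by
  induction k with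
  | zero => exact .refl
  | succ k ih => exact ih.tail ⟨ν (k + 1), rfl⟩

theorem valence_anti (h : Reaches g s t) : valence g t ⊆ valence g s :=
  fun _ hx => ⟨hx.1, h.trans hx.2⟩

theorem stable_dynamics_of_fair {σ : ℕ → Finset (Fin n)} (hσ : Fair σ) {k₀ : ℕ}
    (h : ∀ k, k₀ ≤ k → dynamics g s σ k = dynamics g s σ k₀) :
    Stable g (dynamics g s σ k₀) := by
  intro i
  obtain ⟨k, hk, hi⟩ := hσ i (k₀ + 1)
  obtain ⟨k, rfl⟩ : ∃ k', k = k' + 1 := ⟨k - 1, by omega⟩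
  have := congrFun (h (k + 1) (by omega)) i
  rwa [dynamics_succ, step, if_pos hi, h k (by omega)] at this

theorem Convergent.valence_nonempty [NeZero n] (hg : Convergent g) (s : ∀ j, A j) :
    (valence g s).Nonempty := by
  obtain ⟨k₀, hk₀⟩ := hg s _ (fun _ => Finset.singleton_nonempty _) (fair_singleton_ofNat n)
  exact ⟨_, stable_dynamics_of_fair (fair_singleton_ofNat n) hk₀, reaches_dynamics_singleton _ k₀⟩

section SelfIndependent

theorem step_singleton_congr {i : Fin n} (hi : SelfIndependent i (g i))
    (h : ∀ j, j ≠ i → u j = v j) : step g {i} u = step g {i} v := by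
  funext j
  by_cases hj : j = i
  · subst hj; simp [step, hi u v h]
  · simp [step, hj, h j hj]

theorem step_singleton_idem {i : Fin n} (hi : SelfIndependent i (g i)) :
    step g {i} (step g {i} u) = step g {i} u :=
  step_singleton_congr hi fun _ hj => step_apply_of_notMem (by simpa using hj)

theorem step_singleton_step_insert {i : Fin n} (hi : SelfIndependent i (g i))
    (S : Finset (Fin n)) : step g {i} (step g (insert i S) u) = step g {i} (step g S u) :=
  step_singleton_congr hi fun j hj => by simp [step, hj]

variable (hsi : ∀ i, SelfIndependent i (g i)) (hval : ∀ s, (valence g s).Nonempty)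
include hsi hval

theorem valence_inter_nonempty {i : Fin n} (h : ∀ j, j ≠ i → u j = v j) :
    (valence g u ∩ valence g v).Nonempty := by
  obtain ⟨z, hz⟩ := hval (step g {i} u)
  exact ⟨z, valence_anti (.step i) hz,
    valence_anti (.step i) (step_singleton_congr (hsi i) h ▸ hz)⟩

theorem exists_bivalent {a b : ∀ j, A j} (hab : a ≠ b) (ha : Stable g a) (hb : Stable g b) :
    ∃ s, Bivalent g s := by
  by_contra! H
  have key : ∀ S : Finset (Fin n), a ∈ valence g (S.piecewise b a) := by
    intro S
    induction S using Finset.induction_on with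
    | empty => simp [Stable.valence_eq ha]
    | insert i S _ ih =>
      obtain ⟨z, hzu, hzv⟩ := valence_inter_nonempty hsi hval (i := i)
        (u := S.piecewise b a) (v := (insert i S).piecewise b a)
        fun j hj => by rw [Finset.piecewise_insert, Function.update_of_ne hj]
      obtain rfl : z = a := H _ hzu ih
      exact hzv
  have := key Finset.univ
  rw [Finset.piecewise_univ, Stable.valence_eq hb] at this
  exact hab this

theorem valence_step_subset_of_reaches {i : Fin n}
    (H : ∀ t (S : Finset (Fin n)), Reaches g s t → i ∈ S → (valence g (step g S t)).Subsingleton)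
    (hx : Stable g x) (hsv : Reaches g s v) (hvx : Reaches g v x) :
    valence g (step g {i} v) ⊆ {x} := by
  induction hvx using Relation.ReflTransGen.head_induction_on with
  | refl => rw [Stable.step_eq hx, Stable.valence_eq hx]
  | @head v _ hvv' _ ih =>
    obtain ⟨j, rfl⟩ := hvv'
    have ih := ih (hsv.tail ⟨j, rfl⟩)
    by_cases hji : j = i
    · subst hji
      rwa [step_singleton_idem (hsi j)] at ih
    · -- `step g {i, j} v` is univalent, and by self-independence it leads both to
      -- `step g {i} (step g {j} v)` and to `step g {j} (step g {i} v)`.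
      obtain ⟨q, hq⟩ := hval (step g {i} (step g {j} v))
      obtain ⟨r, hr⟩ := hval (step g {j} (step g {i} v))
      have hqij : q ∈ valence g (step g {i, j} v) :=
        valence_anti (.step i) (by rwa [step_singleton_step_insert (hsi i)])
      have hrij : r ∈ valence g (step g {i, j} v) :=
        valence_anti (.step j) (by rwa [Finset.pair_comm, step_singleton_step_insert (hsi j)])
      have hrq : r = q := H v {i, j} hsv (by simp) hrij hqij
      intro z hz
      rw [H v {i} hsv (Finset.mem_singleton_self i) hz (valence_anti (.step j) hr), hrq]
      exact ih hq

theorem exists_bivalent_step (hs : Bivalent g s) (i : Fin n) :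
    ∃ t S, Reaches g s t ∧ i ∈ S ∧ Bivalent g (step g S t) := by
  by_contra! H
  obtain ⟨x₀, hx₀⟩ := hval (step g {i} s)
  obtain ⟨x, hx, hne⟩ := hs.exists_ne x₀
  exact hne (valence_step_subset_of_reaches hsi hval H hx.1 .refl hx.2 hx₀).symm

theorem exists_run_bivalent (hs : Bivalent g s) (I : Finset (Fin n)) :
    ∃ w : List (Finset (Fin n)), (∀ S ∈ w, S.Nonempty) ∧ (∀ i ∈ I, ∃ S ∈ w, i ∈ S) ∧
      Bivalent g (run g w s) := by
  induction I using Finset.induction_on with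
  | empty => exact ⟨[], by simp, by simp, hs⟩
  | insert i I _ ih =>
    obtain ⟨w, hw, hwI, hbiv⟩ := ih
    obtain ⟨t, S, hst, hiS, hbiv'⟩ := exists_bivalent_step hsi hval hbiv i
    obtain ⟨w', hw', rfl⟩ := hst.exists_run
    refine ⟨w ++ w' ++ [S], ?_, ?_, by rw [run_append, run_append]; exact hbiv'⟩
    · simp only [List.mem_append, List.mem_singleton]
      rintro T ((hT | hT) | rfl)
      exacts [hw T hT, hw' T hT, ⟨i, hiS⟩]
    · simp only [Finset.mem_insert, List.mem_append, List.mem_singleton]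
      rintro j (rfl | hj)
      · exact ⟨S, Or.inr rfl, hiS⟩
      · obtain ⟨T, hT, hjT⟩ := hwI j hj
        exact ⟨T, Or.inl (Or.inl hT), hjT⟩

theorem exists_fair_schedule_bivalent [NeZero n] (hs : Bivalent g s) :
    ∃ σ : ℕ → Finset (Fin n), (∀ k, (σ k).Nonempty) ∧ Fair σ ∧
      ∀ N, ∃ k, N ≤ k ∧ Bivalent g (dynamics g s σ k) := by
  choose! W hWne hWall hWbiv using fun s (hs : Bivalent g s) => by
    simpa using exists_run_bivalent hsi hval hs Finset.univ
  set F : (∀ j, A j) → ∀ j, A j := fun s => run g (W s) s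
  have hbiv : ∀ k, Bivalent g (F^[k] s) := by
    intro k
    induction k with
    | zero => exact hs
    | succ k ih => exact (Function.iterate_succ_apply' F k s).symm ▸ hWbiv _ ih
  obtain ⟨f, T, hT0, hTsucc, hTle, hf, hfmem⟩ := List.exists_seq_flatten (fun k => W (F^[k] s))
    fun k => List.ne_nil_of_mem (hWall _ (hbiv k) 0).choose_spec.1
  have hdyn : ∀ k, dynamics g s (fun k => f (k - 1)) (T k) = F^[k] s := by
    intro k
    induction k with
    | zero => rw [hT0]; rfl
    | succ k ih =>
      rw [hTsucc, dynamics_add_length fun m hm => hf k m hm, ih]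
      exact (Function.iterate_succ_apply' F k s).symm
  -- `σ 0` is never read by `dynamics`.
  refine ⟨fun k => f (k - 1), fun k => ?_, fun i N => ?_, fun N => ⟨T N, hTle N, hdyn N ▸ hbiv N⟩⟩
  · obtain ⟨k', hk'⟩ := hfmem (k - 1)
    exact hWne _ (hbiv k') _ hk'
  · obtain ⟨S, hS, hiS⟩ := hWall _ (hbiv N) i
    obtain ⟨m, hm, rfl⟩ := List.getElem_of_mem hS
    exact ⟨T N + m + 1, by have := hTle N; omega, by simpa [hf N m hm] using hiS⟩

end SelfIndependent

end InteractionSystem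

open InteractionSystem

theorem two_stable_states_not_convergent_general
    {n : ℕ} {A : Fin n → Type*}
    (g : ∀ i : Fin n, (∀ j, A j) → A i)
    (hsi : ∀ i, SelfIndependent i (g i))
    (a b : ∀ j, A j) (hab : a ≠ b)
    (ha : Stable g a) (hb : Stable g b) :
    ∃ (s0 : ∀ j, A j) (σ : ℕ → Finset (Fin n)),
      (∀ t, (σ t).Nonempty) ∧ Fair σ ∧
      ¬ EventuallyConstant (dynamics g s0 σ) := by
  have : NeZero n := ⟨by rintro rfl; exact hab (funext fun j => j.elim0)⟩
  by_contra! hconv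
  have hval := Convergent.valence_nonempty (g := g) hconv
  obtain ⟨s, hs⟩ := exists_bivalent hsi hval hab ha hb
  obtain ⟨σ, hne, hfair, hbiv⟩ := exists_fair_schedule_bivalent hsi hval hs
  obtain ⟨k₀, hk₀⟩ := hconv s σ hne hfair
  obtain ⟨k, hk, hbk⟩ := hbiv k₀
  rw [hk₀ k hk] at hbk
  exact Stable.not_bivalent (stable_dynamics_of_fair hfair hk₀) hbk

/-- A system of deterministic, historyless, self-independent
reaction functions with two distinct stable states is not convergent. -/
theorem two_stable_states_not_convergent
    {n : ℕ} {A : Fin n → Type*} [∀ i, Nonempty (A i)]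
    (g : ∀ i : Fin n, (∀ j, A j) → A i)
    (hsi : ∀ i, SelfIndependent i (g i))
    (a b : ∀ j, A j) (hab : a ≠ b)
    (ha : Stable g a) (hb : Stable g b) :
    ∃ (s0 : ∀ j, A j) (σ : ℕ → Finset (Fin n)),
      (∀ t, (σ t).Nonempty) ∧ Fair σ ∧
      ¬ EventuallyConstant (dynamics g s0 σ) :=
  two_stable_states_not_convergent_general g hsi a b hab ha hb
end

section
/- Fix k ≥ 1. Consider an interaction system with n nodes in which every node i has a deterministic, stationary, self-independent k-recall reaction function g_i : A^k → A_i. If there exist two distinct stable states (two distinct profiles a ≠ b with g_i(a,…,a) = a_i and g_i(b,…,b) = b_i for all i), then the system is not convergent: there exist an initial history in A^k and a fair schedule for which the dynamics is not eventually constant. -/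
section ConcatStream

variable {α : Type*} (B : ℕ → List α)

theorem flatMap_range_succ (m : ℕ) :
    (List.range (m + 1)).flatMap B = (List.range m).flatMap B ++ B m := by
  rw [List.range_succ, List.flatMap_append, List.flatMap_singleton]

variable {B}

theorem le_length_flatMap_range (hB : ∀ m, B m ≠ []) (m : ℕ) :
    m ≤ ((List.range m).flatMap B).length := by
  induction m with
  | zero => exact Nat.zero_le _
  | succ m ih =>
    rw [flatMap_range_succ, List.length_append]
    have := List.length_pos_iff.2 (hB m)
    omega

theorem flatMap_range_prefix {m m' : ℕ} (h : m ≤ m') :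
    (List.range m).flatMap B <+: (List.range m').flatMap B := by
  obtain ⟨d, rfl⟩ := Nat.exists_eq_add_of_le h
  induction d with
  | zero => exact List.prefix_rfl
  | succ d ih =>
    rw [← Nat.add_assoc, flatMap_range_succ]
    exact (ih (by omega)).trans (List.prefix_append _ _)

variable [Inhabited α]

-- The concatenation `B 0 ++ B 1 ++ ⋯` read as a stream; `default` is never used once all
-- blocks are nonempty.
variable (B) in
def concatStream (t : ℕ) : α :=
  ((List.range (t + 1)).flatMap B).getD t default

theorem concatStream_eq_getElem (hB : ∀ m, B m ≠ []) {m t : ℕ}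
    (ht : t < ((List.range m).flatMap B).length) :
    concatStream B t = ((List.range m).flatMap B)[t] := by
  have ht' : t < ((List.range (t + 1)).flatMap B).length :=
    Nat.lt_of_lt_of_le (Nat.lt_succ_self t) (le_length_flatMap_range hB _)
  rw [concatStream, List.getD_eq_getElem _ _ ht']
  rcases le_total (t + 1) m with h | h
  · exact (flatMap_range_prefix h).getElem ht'
  · exact ((flatMap_range_prefix h).getElem ht).symm

theorem exists_concatStream_eq (hB : ∀ m, B m ≠ []) {m : ℕ} {a : α} (ha : a ∈ B m) :
    ∃ t ≥ m, concatStream B t = a := by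
  obtain ⟨j, hj, rfl⟩ := List.getElem_of_mem ha
  have hlen := le_length_flatMap_range hB m
  refine ⟨((List.range m).flatMap B).length + j, by omega, ?_⟩
  rw [concatStream_eq_getElem hB (m := m + 1) (by simp [flatMap_range_succ]; omega)]
  simp [flatMap_range_succ, List.getElem_append_right]

theorem exists_mem_concatStream (hB : ∀ m, B m ≠ []) (t : ℕ) :
    ∃ m, concatStream B t ∈ B m := by
  have ht : t < ((List.range (t + 1)).flatMap B).length :=
    Nat.lt_of_lt_of_le (Nat.lt_succ_self t) (le_length_flatMap_range hB _)
  rw [concatStream_eq_getElem hB ht]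
  obtain ⟨m, -, hm⟩ := List.mem_flatMap.1 (List.getElem_mem ht)
  exact ⟨m, hm⟩

end ConcatStream

open Relation

def IsFairSchedule {n : ℕ} (τ : ℕ → Finset (Fin n)) : Prop :=
  (∀ t, (τ t).Nonempty) ∧ Fair τ

theorem isFairSchedule_const_univ {n : ℕ} [NeZero n] :
    IsFairSchedule fun _ : ℕ => (Finset.univ : Finset (Fin n)) :=
  ⟨fun _ => Finset.univ_nonempty, fun i N => ⟨N, le_rfl, Finset.mem_univ i⟩⟩

namespace IsFairSchedule

variable {n : ℕ} {τ : ℕ → Finset (Fin n)}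

theorem shift (hτ : IsFairSchedule τ) (s : ℕ) : IsFairSchedule fun u => τ (s + u) := by
  refine ⟨fun u => hτ.1 _, fun i N => ?_⟩
  obtain ⟨t, ht, hi⟩ := hτ.2 i (s + N)
  exact ⟨t - s, by omega, show i ∈ τ (s + (t - s)) by rwa [Nat.add_sub_cancel' (by omega)]⟩

theorem cons (hτ : IsFairSchedule τ) {S : Finset (Fin n)} (hS : S.Nonempty) :
    IsFairSchedule fun t => if t = 0 then S else τ (t - 1) := by
  refine ⟨fun t => ?_, fun i N => ?_⟩
  · dsimp only
    split_ifs
    exacts [hS, hτ.1 _]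
  · obtain ⟨t, ht, hi⟩ := hτ.2 i N
    exact ⟨t + 1, by omega, by simpa using hi⟩

end IsFairSchedule

namespace Scheduled

variable {X : Type*} {n : ℕ} (step : Finset (Fin n) → X → X)

def run (x : X) (τ : ℕ → Finset (Fin n)) : ℕ → X
  | 0 => x
  | t + 1 => step (τ t) (run x τ t)

def Reaches : X → X → Prop :=
  ReflTransGen fun x y => ∃ S : Finset (Fin n), S.Nonempty ∧ step S x = y

/-- The valence of `x` in the terminology of Fischer, Lynch and Paterson: `x` is univalent when
this set is a subsingleton and bivalent when it is nontrivial. -/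
def limits (x : X) : Set X :=
  {y | ∃ τ, IsFairSchedule τ ∧ ∃ T₀, ∀ T ≥ T₀, run step x τ T = y}

def RunsConverge : Prop :=
  ∀ x τ, IsFairSchedule τ → EventuallyConstant (run step x τ)

variable {step}

@[simp]
theorem run_zero (x : X) (τ : ℕ → Finset (Fin n)) : run step x τ 0 = x :=
  rfl

theorem run_add (x : X) (τ : ℕ → Finset (Fin n)) (s t : ℕ) :
    run step x τ (s + t) = run step (run step x τ s) (fun u => τ (s + u)) t := by
  induction t with
  | zero => rfl
  | succ t ih => rw [← Nat.add_assoc, run, ih]; rfl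

theorem run_length_eq_foldl (x : X) {τ : ℕ → Finset (Fin n)} {L : List (Finset (Fin n))}
    (hτ : ∀ t (ht : t < L.length), τ t = L[t]) :
    run step x τ L.length = L.foldl (fun y S => step S y) x := by
  induction L using List.reverseRecOn with
  | nil => rfl
  | append_singleton L S ih =>
    have hS : τ L.length = S := by simpa using hτ L.length (by simp)
    rw [List.length_append, List.length_singleton, run, hS, List.foldl_append,
      ih fun t ht => by rw [hτ t (by simp; omega), List.getElem_append_left ht]]
    rfl

theorem reaches_step {S : Finset (Fin n)} (hS : S.Nonempty) (x : X) : Reaches step x (step S x) :=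
  ReflTransGen.single ⟨S, hS, rfl⟩

theorem reaches_iterate {S : Finset (Fin n)} (hS : S.Nonempty) (x : X) (r : ℕ) :
    Reaches step x ((step S)^[r] x) := by
  induction r with
  | zero => exact ReflTransGen.refl
  | succ r ih => rw [Function.iterate_succ_apply']; exact ih.tail ⟨S, hS, rfl⟩

theorem reaches_run {τ : ℕ → Finset (Fin n)} (hτ : ∀ t, (τ t).Nonempty) (x : X) (t : ℕ) :
    Reaches step x (run step x τ t) := by
  induction t with
  | zero => exact ReflTransGen.refl
  | succ t ih => exact ih.tail ⟨τ t, hτ t, rfl⟩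

theorem exists_list_of_reaches {x y : X} (h : Reaches step x y) :
    ∃ L : List (Finset (Fin n)), (∀ S ∈ L, S.Nonempty) ∧
      L.foldl (fun y S => step S y) x = y := by
  induction h with
  | refl => exact ⟨[], by simp, rfl⟩
  | tail _ hstep ih =>
    obtain ⟨L, hL, rfl⟩ := ih
    obtain ⟨S, hS, rfl⟩ := hstep
    refine ⟨L ++ [S], fun S' hS' => ?_, by simp⟩
    rcases List.mem_append.1 hS' with h | h
    exacts [hL S' h, List.mem_singleton.1 h ▸ hS]

theorem mem_limits_run {x z : X} {τ : ℕ → Finset (Fin n)} (hτ : IsFairSchedule τ)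
    {T₀ : ℕ} (hT₀ : ∀ T ≥ T₀, run step x τ T = z) (s : ℕ) :
    z ∈ limits step (run step x τ s) :=
  ⟨_, hτ.shift s, T₀, fun T hT => by rw [← run_add]; exact hT₀ _ (by omega)⟩

theorem limits_step_subset {S : Finset (Fin n)} (hS : S.Nonempty) (x : X) :
    limits step (step S x) ⊆ limits step x := by
  rintro z ⟨τ, hτ, T₀, hT₀⟩
  refine ⟨_, hτ.cons hS, T₀ + 1, fun T hT => ?_⟩
  obtain ⟨T, rfl⟩ := Nat.exists_eq_add_of_le' (show 1 ≤ T by omega)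
  rw [Nat.add_comm, run_add]
  convert hT₀ T (by omega) using 2
  · simp [run]
  · funext u
    simp

theorem limits_subset_of_reaches {x y : X} (h : Reaches step x y) :
    limits step y ⊆ limits step x := by
  induction h with
  | refl => exact subset_rfl
  | tail _ hstep ih =>
    obtain ⟨S, hS, rfl⟩ := hstep
    exact (limits_step_subset hS _).trans ih

theorem limits_eq_singleton [NeZero n] {y : X} (hy : ∀ S, step S y = y) :
    limits step y = {y} := by
  have hrun : ∀ τ T, run step y τ T = y := fun τ T => by
    induction T with
    | zero => rfl
    | succ T ih => rw [run, ih, hy]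
  refine Set.eq_singleton_iff_unique_mem.2
    ⟨⟨_, isFairSchedule_const_univ, 0, fun T _ => hrun _ T⟩, ?_⟩
  rintro z ⟨τ, -, T₀, hT₀⟩
  rw [← hT₀ T₀ le_rfl, hrun]

section Convergent

variable [NeZero n] (hconv : RunsConverge step)
include hconv

theorem limits_nonempty (x : X) : (limits step x).Nonempty := by
  obtain ⟨T₀, hT₀⟩ := hconv x _ isFairSchedule_const_univ
  exact ⟨_, _, isFairSchedule_const_univ, T₀, hT₀⟩

theorem limits_eq_of_join {x y : X} (hx : (limits step x).Subsingleton)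
    (hy : (limits step y).Subsingleton) (hxy : Join (Reaches step) x y) :
    limits step x = limits step y := by
  obtain ⟨z, hxz, hyz⟩ := hxy
  obtain ⟨w, hw⟩ := limits_nonempty hconv z
  rw [hx.eq_singleton_of_mem (limits_subset_of_reaches hxz hw),
    hy.eq_singleton_of_mem (limits_subset_of_reaches hyz hw)]

theorem limits_eq_of_chain (c : ℕ → X) (N : ℕ)
    (hjoin : ∀ r < N, Join (Reaches step) (c r) (c (r + 1)))
    (huni : ∀ r ≤ N, (limits step (c r)).Subsingleton) :
    limits step (c 0) = limits step (c N) := by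
  induction N with
  | zero => rfl
  | succ N ih =>
    rw [ih (fun r hr => hjoin r (by omega)) (fun r hr => huni r (by omega))]
    exact limits_eq_of_join hconv (huni N (by omega)) (huni _ le_rfl) (hjoin N (by omega))

end Convergent

section Bivalence

variable [NeZero n] (hconv : RunsConverge step)
  (hjoin : ∀ i S x, Join (Reaches step) (step {i} (step S x)) (step (insert i S) x))
include hconv hjoin

theorem limits_step_eq_limits_step_singleton {i : Fin n} {y : X}
    (huni : ∀ S, i ∈ S → (limits step (step S y)).Subsingleton) {S : Finset (Fin n)}
    (hi : i ∈ S) :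
    limits step (step S y) = limits step (step {i} y) := by
  suffices ∀ T, limits step (step (insert i T) y) = limits step (step {i} y) by
    simpa [Finset.insert_eq_of_mem hi] using this S
  intro T
  induction T using Finset.induction_on with
  | empty => simp
  | insert j T _ ih =>
    rw [Finset.insert_comm, ← ih]
    obtain ⟨z, hz₁, hz₂⟩ := hjoin j (insert i T) y
    exact limits_eq_of_join hconv (huni _ (by simp)) (huni _ (by simp))
      ⟨z, hz₂, (reaches_step (Finset.singleton_nonempty j) _).trans hz₁⟩

theorem exists_reaches_limits_step_nontrivial {x : X} (hx : (limits step x).Nontrivial)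
    (i : Fin n) :
    ∃ y S, Reaches step x y ∧ i ∈ S ∧ (limits step (step S y)).Nontrivial := by
  -- Otherwise every history reached by a step activating `i` has the valence of `step {i} x`,
  -- and so has `x`, since every fair run from `x` activates `i`.
  by_contra! huni
  have hval : ∀ y, Reaches step x y → ∀ S, i ∈ S →
      limits step (step S y) = limits step (step {i} x) := by
    intro y hy
    induction hy with
    | refl =>
      exact fun S hi => limits_step_eq_limits_step_singleton hconv hjoin (huni x · .refl) hi
    | @tail y y' hy hstep ih =>
      obtain ⟨T, hT, rfl⟩ := hstep
      have hy' : Reaches step x (step T y) := hy.tail ⟨T, hT, rfl⟩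
      intro S hi
      calc limits step (step S (step T y))
          = limits step (step {i} (step T y)) :=
            limits_step_eq_limits_step_singleton hconv hjoin (huni _ · hy') hi
        _ = limits step (step (insert i T) y) :=
            limits_eq_of_join hconv (huni _ _ hy' (Finset.mem_singleton_self i))
              (huni _ _ hy (Finset.mem_insert_self i T)) (hjoin i T y)
        _ = limits step (step {i} x) := ih _ (Finset.mem_insert_self i T)
  refine Set.not_nontrivial_iff.2 ((huni x {i} .refl (Finset.mem_singleton_self i)).anti ?_) hx
  rintro z ⟨τ, hτ, T₀, hT₀⟩
  obtain ⟨t, -, hit⟩ := hτ.2 i 0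
  rw [← hval _ (reaches_run hτ.1 x t) _ hit]
  exact mem_limits_run hτ hT₀ (t + 1)

theorem exists_list_forall_mem_limits_nontrivial {x : X} (hx : (limits step x).Nontrivial) :
    ∃ L : List (Finset (Fin n)), (∀ S ∈ L, S.Nonempty) ∧ (∀ i, ∃ S ∈ L, i ∈ S) ∧
      (limits step (L.foldl (fun y S => step S y) x)).Nontrivial := by
  suffices ∀ I : Finset (Fin n), ∃ L : List (Finset (Fin n)), (∀ S ∈ L, S.Nonempty) ∧
      (∀ i ∈ I, ∃ S ∈ L, i ∈ S) ∧
      (limits step (L.foldl (fun y S => step S y) x)).Nontrivial by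
    obtain ⟨L, hL, hcov, hbiv⟩ := this Finset.univ
    exact ⟨L, hL, fun i => hcov i (Finset.mem_univ i), hbiv⟩
  intro I
  induction I using Finset.induction_on with
  | empty => exact ⟨[], by simp, by simp, hx⟩
  | insert i I _ ih =>
    obtain ⟨L, hL, hcov, hbiv⟩ := ih
    obtain ⟨y, S, hy, hi, hbiv'⟩ := exists_reaches_limits_step_nontrivial hconv hjoin hbiv i
    obtain ⟨L', hL', rfl⟩ := exists_list_of_reaches hy
    refine ⟨L ++ L' ++ [S], ?_, ?_, by simpa using hbiv'⟩
    · simp only [List.mem_append, List.mem_singleton]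
      rintro S' ((h | h) | rfl)
      exacts [hL S' h, hL' S' h, ⟨i, hi⟩]
    · simp only [Finset.mem_insert, List.mem_append, List.mem_singleton]
      rintro j (rfl | hj)
      · exact ⟨S, Or.inr rfl, hi⟩
      · obtain ⟨S', hS', hj'⟩ := hcov j hj
        exact ⟨S', Or.inl (Or.inl hS'), hj'⟩

theorem exists_isFairSchedule_frequently_limits_nontrivial {x₀ : X}
    (hx₀ : (limits step x₀).Nontrivial) :
    ∃ τ, IsFairSchedule τ ∧
      ∀ N, ∃ T ≥ N, (limits step (run step x₀ τ T)).Nontrivial := by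
  choose! B hBne hBcov hBbiv using fun x (hx : (limits step x).Nontrivial) =>
    exists_list_forall_mem_limits_nontrivial hconv hjoin hx
  let c : ℕ → X := fun m => Nat.rec x₀ (fun _ x => (B x).foldl (fun y S => step S y) x) m
  have hc : ∀ m, (limits step (c m)).Nontrivial := fun m => by
    induction m with
    | zero => exact hx₀
    | succ m ih => exact hBbiv _ ih
  let blocks : ℕ → List (Finset (Fin n)) := fun m => B (c m)
  have hblock : ∀ m, blocks m ≠ [] := fun m hm => by
    simpa [blocks, hm] using hBcov _ (hc m) 0
  have hfoldl : ∀ m, ((List.range m).flatMap blocks).foldl (fun y S => step S y) x₀ = c m :=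
    fun m => by
      induction m with
      | zero => rfl
      | succ m ih => rw [flatMap_range_succ, List.foldl_append, ih]
  refine ⟨concatStream blocks, ⟨fun t => ?_, fun i N => ?_⟩, fun N => ?_⟩
  · obtain ⟨m, hm⟩ := exists_mem_concatStream hblock t
    exact hBne _ (hc m) _ hm
  · obtain ⟨S, hS, hi⟩ := hBcov _ (hc N) i
    obtain ⟨t, ht, hSt⟩ := exists_concatStream_eq hblock hS
    exact ⟨t, ht, hSt ▸ hi⟩
  · refine ⟨_, le_length_flatMap_range hblock N, ?_⟩
    rw [run_length_eq_foldl _ fun t ht => concatStream_eq_getElem hblock ht, hfoldl]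
    exact hc N

theorem limits_subsingleton
    (hfix : ∀ y, (∀ i, ∃ S, i ∈ S ∧ step S y = y) → ∀ S, step S y = y) (x : X) :
    (limits step x).Subsingleton := by
  by_contra hx
  obtain ⟨τ, hτ, hfreq⟩ :=
    exists_isFairSchedule_frequently_limits_nontrivial hconv hjoin (Set.not_subsingleton_iff.1 hx)
  obtain ⟨T₀, hT₀⟩ := hconv x τ hτ
  have hy : ∀ S, step S (run step x τ T₀) = run step x τ T₀ := hfix _ fun i => by
    obtain ⟨t, ht, hi⟩ := hτ.2 i T₀
    refine ⟨τ t, hi, ?_⟩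
    rw [← hT₀ t ht]
    exact (hT₀ (t + 1) (by omega)).trans (hT₀ t ht).symm
  obtain ⟨T, hT, hbiv⟩ := hfreq T₀
  rw [hT₀ T hT, limits_eq_singleton hy] at hbiv
  exact Set.not_nontrivial_singleton hbiv

end Bivalence

end Scheduled

namespace KRecall

open Scheduled

variable {n k : ℕ} {A : Fin n → Type*}

/-- Histories list the last `k + 1` profiles, oldest first. -/
def histStep (g : ∀ i : Fin n, (Fin (k + 1) → ∀ j, A j) → A i) (S : Finset (Fin n))
    (h : Fin (k + 1) → ∀ j, A j) : Fin (k + 1) → ∀ j, A j :=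
  Fin.snoc (α := fun _ => ∀ j, A j) (Fin.tail h) fun i =>
    if i ∈ S then g i h else h (Fin.last k) i

def AgreeOff (i : Fin n) (h₁ h₂ : Fin (k + 1) → ∀ j, A j) : Prop :=
  ∀ (m : Fin (k + 1)) (j : Fin n), j ≠ i → h₁ m j = h₂ m j

variable {g : ∀ i : Fin n, (Fin (k + 1) → ∀ j, A j) → A i} {S : Finset (Fin n)}
  {h : Fin (k + 1) → ∀ j, A j}

@[simp]
theorem histStep_castSucc (m : Fin k) : histStep g S h m.castSucc = h m.succ := by
  simp [histStep, Fin.tail]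

@[simp]
theorem histStep_last :
    histStep g S h (Fin.last k) = fun i => if i ∈ S then g i h else h (Fin.last k) i := by
  simp [histStep]

theorem histStep_eq_self_iff :
    histStep g S h = h ↔
      (∀ m : Fin k, h m.succ = h m.castSucc) ∧ ∀ i ∈ S, g i h = h (Fin.last k) i := by
  constructor
  · intro e
    refine ⟨fun m => by simpa using congrFun e m.castSucc, fun i hi => ?_⟩
    simpa [hi] using congrFun (congrFun e (Fin.last k)) i
  · rintro ⟨hshift, hreact⟩
    funext m
    induction m using Fin.lastCases with
    | last => funext i; by_cases hi : i ∈ S <;> simp [hi, hreact]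
    | cast m => simp [hshift]

theorem histStep_eq_self_of_forall_exists [NeZero n]
    (hh : ∀ i, ∃ S, i ∈ S ∧ histStep g S h = h) (S : Finset (Fin n)) :
    histStep g S h = h := by
  obtain ⟨S₀, -, h₀⟩ := hh 0
  refine histStep_eq_self_iff.2 ⟨(histStep_eq_self_iff.1 h₀).1, fun i _ => ?_⟩
  obtain ⟨S', hi, h'⟩ := hh i
  exact (histStep_eq_self_iff.1 h').2 i hi

theorem histStep_const {a : ∀ j, A j} (ha : ∀ i, g i (fun _ => a) = a i) (S : Finset (Fin n)) :
    histStep g S (fun _ => a) = fun _ => a :=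
  histStep_eq_self_iff.2 ⟨fun _ => rfl, fun i _ => ha i⟩

theorem agreeOff_histStep_insert (i : Fin n) (S : Finset (Fin n)) (h : Fin (k + 1) → ∀ j, A j) :
    AgreeOff i (histStep g S h) (histStep g (insert i S) h) := by
  intro m j hj
  induction m using Fin.lastCases with
  | last => simp [hj]
  | cast m => simp

section Merging

variable (hsi : ∀ i h h', AgreeOff i h h' → g i h = g i h')
include hsi

theorem iterate_histStep_singleton_eq {i : Fin n} {h₁ h₂ : Fin (k + 1) → ∀ j, A j}
    (h : AgreeOff i h₁ h₂) :
    (histStep g {i})^[k + 1] h₁ = (histStep g {i})^[k + 1] h₂ := by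
  have key : ∀ r, AgreeOff i ((histStep g {i})^[r] h₁) ((histStep g {i})^[r] h₂) ∧
      ∀ m : Fin (k + 1), k + 1 ≤ m + r →
        (histStep g {i})^[r] h₁ m = (histStep g {i})^[r] h₂ m := by
    intro r
    induction r with
    | zero => exact ⟨h, fun m hm => absurd hm (by omega)⟩
    | succ r ih =>
      obtain ⟨hoff, heq⟩ := ih
      simp only [Function.iterate_succ_apply']
      refine ⟨fun m j hj => ?_, fun m hm => ?_⟩
      · induction m using Fin.lastCases with
        | last => simp [hj, hoff _ j hj]
        | cast m => simp [hoff _ j hj]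
      · induction m using Fin.lastCases with
        | last =>
          funext j
          by_cases hj : j = i
          · subst hj
            simp [hsi _ _ _ hoff]
          · simp [hj, hoff _ j hj]
        | cast m =>
          rw [histStep_castSucc, histStep_castSucc]
          exact heq _ (by simp at hm ⊢; omega)
  funext m
  exact (key (k + 1)).2 m (by omega)

theorem join_of_agreeOff {i : Fin n} {h₁ h₂ : Fin (k + 1) → ∀ j, A j}
    (h : AgreeOff i h₁ h₂) :
    Join (Reaches (histStep g)) h₁ h₂ :=
  ⟨_, reaches_iterate (Finset.singleton_nonempty i) h₁ (k + 1),
    iterate_histStep_singleton_eq hsi h ▸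
      reaches_iterate (Finset.singleton_nonempty i) h₂ (k + 1)⟩

theorem join_histStep_singleton_histStep_insert (i : Fin n) (S : Finset (Fin n))
    (h : Fin (k + 1) → ∀ j, A j) :
    Join (Reaches (histStep g)) (histStep g {i} (histStep g S h)) (histStep g (insert i S) h) := by
  refine ⟨_, ?_, reaches_iterate (Finset.singleton_nonempty i) _ (k + 1)⟩
  rw [← iterate_histStep_singleton_eq hsi (agreeOff_histStep_insert i S h),
    Function.iterate_succ_apply]
  exact reaches_iterate (Finset.singleton_nonempty i) _ k

end Merging

def interpolate (a b : ∀ j, A j) (r : ℕ) : ∀ j, A j :=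
  fun j => if (j : ℕ) < r then b j else a j

theorem interpolate_zero (a b : ∀ j, A j) : interpolate a b 0 = a := by
  funext j
  simp [interpolate]

theorem interpolate_of_le (a b : ∀ j, A j) {r : ℕ} (hr : n ≤ r) : interpolate a b r = b := by
  funext j
  simp [interpolate, Nat.lt_of_lt_of_le j.isLt hr]

theorem agreeOff_interpolate (a b : ∀ j, A j) {r : ℕ} (hr : r < n) :
    AgreeOff (k := k) ⟨r, hr⟩ (fun _ => interpolate a b r)
      (fun _ => interpolate a b (r + 1)) := by
  intro _ j hj
  have : (j : ℕ) ≠ r := fun h => hj (Fin.ext h)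
  simp only [interpolate]
  split_ifs <;> first | rfl | omega

theorem run_histStep_apply (h₀ : Fin (k + 1) → ∀ j, A j) (τ : ℕ → Finset (Fin n))
    (T : ℕ) (m : Fin (k + 1)) :
    run (histStep g) h₀ τ T m = run (histStep g) h₀ τ (T + m) 0 := by
  induction m using Fin.induction generalizing T with
  | zero => rfl
  | succ m ih =>
    rw [← histStep_castSucc (g := g) (S := τ T) (h := run (histStep g) h₀ τ T) m]
    change run (histStep g) h₀ τ (T + 1) m.castSucc = _
    rw [ih]
    simp [Nat.add_assoc, Nat.add_comm 1]

theorem exists_trajectory_of_not_eventuallyConstant (h₀ : Fin (k + 1) → ∀ j, A j)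
    {τ : ℕ → Finset (Fin n)} (hτ : IsFairSchedule τ)
    (hdiv : ¬ EventuallyConstant (run (histStep g) h₀ τ)) :
    ∃ (s0 : Fin (k + 1) → ∀ j, A j) (σ : ℕ → Finset (Fin n)) (s : ℕ → ∀ j, A j),
      (∀ t, (σ t).Nonempty) ∧ Fair σ ∧
      (∀ m : Fin (k + 1), s (m : ℕ) = s0 m) ∧
      (∀ t : ℕ, k + 1 ≤ t → ∀ i : Fin n,
        (i ∈ σ t → s t i = g i (fun m : Fin (k + 1) => s (t - (k + 1) + (m : ℕ)))) ∧
        (i ∉ σ t → s t i = s (t - 1) i)) ∧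
      ¬ EventuallyConstant s := by
  -- `s t` is the oldest profile of the history at time `t`, which is then `s t, …, s (t + k)`.
  set s : ℕ → ∀ j, A j := fun t => run (histStep g) h₀ τ t 0
  have hrun : ∀ T, run (histStep g) h₀ τ T = fun m : Fin (k + 1) => s (T + m) :=
    fun T => funext (run_histStep_apply h₀ τ T)
  refine ⟨h₀, fun t => τ (t - (k + 1)), s, fun t => hτ.1 _, fun i N => ?_, fun m => ?_,
    fun t ht i => ?_, fun ⟨t₀, ht₀⟩ => hdiv ⟨t₀, fun T hT => ?_⟩⟩
  · obtain ⟨t, ht, hi⟩ := hτ.2 i N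
    exact ⟨t + (k + 1), by omega, by simpa using hi⟩
  · simpa using (congrFun (hrun 0) m).symm
  · obtain ⟨T, rfl⟩ := Nat.exists_eq_add_of_le' ht
    have hs : s (T + (k + 1)) = histStep g (τ T) (run (histStep g) h₀ τ T) (Fin.last k) := by
      rw [show T + (k + 1) = T + 1 + k by omega]
      exact (congrFun (hrun (T + 1)) (Fin.last k)).symm
    have hprev : s (T + (k + 1) - 1) = run (histStep g) h₀ τ T (Fin.last k) := by
      simp [hrun]
    rw [hs, hprev, hrun]
    simp only [histStep_last, Nat.add_sub_cancel]
    exact ⟨fun hi => if_pos hi, fun hi => if_neg hi⟩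
  · rw [hrun, hrun]
    funext m
    rw [ht₀ _ (by omega), ht₀ (t₀ + m) (by omega)]

end KRecall

open Scheduled KRecall

theorem k_recall_two_stable_states_not_convergent_general
    {n k : ℕ} {A : Fin n → Type*} (hk : 1 ≤ k)
    (g : ∀ i : Fin n, (Fin k → ∀ j, A j) → A i)
    (hsi : ∀ i : Fin n, ∀ h h' : Fin k → ∀ j, A j,
      (∀ (m : Fin k) (j : Fin n), j ≠ i → h m j = h' m j) → g i h = g i h')
    (a b : ∀ j, A j) (hab : a ≠ b)
    (ha : ∀ i, g i (fun _ => a) = a i) (hb : ∀ i, g i (fun _ => b) = b i) :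
    ∃ (s0 : Fin k → ∀ j, A j) (σ : ℕ → Finset (Fin n)) (s : ℕ → ∀ j, A j),
      (∀ t, (σ t).Nonempty) ∧ Fair σ ∧
      (∀ m : Fin k, s (m : ℕ) = s0 m) ∧
      (∀ t : ℕ, k ≤ t → ∀ i : Fin n,
        (i ∈ σ t → s t i = g i (fun m : Fin k => s (t - k + (m : ℕ)))) ∧
        (i ∉ σ t → s t i = s (t - 1) i)) ∧
      ¬ EventuallyConstant s := by
  obtain ⟨k, rfl⟩ := Nat.exists_eq_add_of_le' hk
  have : NeZero n := ⟨by rintro rfl; exact hab (funext fun j => j.elim0)⟩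
  by_contra hconv
  have hruns : RunsConverge (histStep g) := fun h₀ τ hτ => by
    by_contra hdiv
    exact hconv (exists_trajectory_of_not_eventuallyConstant h₀ hτ hdiv)
  have huni := limits_subsingleton hruns (join_histStep_singleton_histStep_insert hsi)
    fun _ => histStep_eq_self_of_forall_exists
  have hchain := limits_eq_of_chain hruns (fun r _ => interpolate a b r) n
    (fun r hr => join_of_agreeOff hsi (agreeOff_interpolate a b hr)) (fun r _ => huni _)
  simp only [interpolate_zero, interpolate_of_le a b le_rfl,
    limits_eq_singleton (histStep_const ha), limits_eq_singleton (histStep_const hb),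
    Set.singleton_eq_singleton_iff] at hchain
  exact hab (congrFun hchain 0)

/-- A system of deterministic, stationary, self-independent
`k`-recall reaction functions (`k ≥ 1`) with two distinct stable states is not
convergent: there are an initial history and a fair schedule whose dynamics is
not eventually constant. -/
theorem k_recall_two_stable_states_not_convergent
    {n k : ℕ} {A : Fin n → Type*} [∀ i, Nonempty (A i)] (hk : 1 ≤ k)
    (g : ∀ i : Fin n, (Fin k → ∀ j, A j) → A i)
    (hsi : ∀ i : Fin n, ∀ h h' : Fin k → ∀ j, A j,
      (∀ (m : Fin k) (j : Fin n), j ≠ i → h m j = h' m j) → g i h = g i h')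
    (a b : ∀ j, A j) (hab : a ≠ b)
    (ha : ∀ i, g i (fun _ => a) = a i) (hb : ∀ i, g i (fun _ => b) = b i) :
    ∃ (s0 : Fin k → ∀ j, A j) (σ : ℕ → Finset (Fin n)) (s : ℕ → ∀ j, A j),
      (∀ t, (σ t).Nonempty) ∧ Fair σ ∧
      (∀ m : Fin k, s (m : ℕ) = s0 m) ∧
      (∀ t : ℕ, k ≤ t → ∀ i : Fin n,
        (i ∈ σ t → s t i = g i (fun m : Fin k => s (t - k + (m : ℕ)))) ∧
        (i ∉ σ t → s t i = s (t - 1) i)) ∧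
      ¬ EventuallyConstant s :=
  k_recall_two_stable_states_not_convergent_general hk g hsi a b hab ha hb
end

section
/- Consider an interaction system with n nodes in which every action space A_i is finite and every node i has, for each time step t, a deterministic self-independent 1-recall reaction function f_{i,t} : A → A_i (not necessarily stationary, i.e., the functions may vary with t). Suppose there exist two distinct profiles a ≠ b that are stable, i.e., there is a time T such that f_{i,t}(a) = a_i and f_{i,t}(b) = b_i for every node i and every t ≥ T. Then the system is not safe: there exist an initial profile and a fair schedule for which the dynamics is not eventually constant. -/
/-- The dynamics for (possibly non-stationary) time-indexed deterministic
1-recall reaction functions. -/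
def dynamicsT {n : ℕ} {A : Fin n → Type*}
    (f : ℕ → ∀ i : Fin n, (∀ j, A j) → A i) (s0 : ∀ j, A j)
    (σ : ℕ → Finset (Fin n)) : ℕ → ∀ j, A j
  | 0 => s0
  | t + 1 => fun i =>
      if i ∈ σ (t + 1) then f (t + 1) i (dynamicsT f s0 σ t)
      else dynamicsT f s0 σ t i

/-!
A valency argument in the style of Fischer, Lynch and Paterson. Suppose that every fair run
converges, and call a reachable configuration (profile and time) bivalent if two of its fair
continuations converge to different profiles.

A profile that is stable from time `T` on is a limit of itself from time `0`: let a single node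
react alone until time `T + 1`, which by self-independence restores the profile. Two profiles that
differ only at a node `k` share a limit, since a lone reaction of `k` cannot tell them apart.
Changing `a` into `b` one node at a time therefore gives a bivalent initial profile.

From a bivalent configuration, some continuation in which a prescribed node reacts ends in a
bivalent configuration (otherwise all reactions involving that node would have one common limit),
and some continuation that changes the profile ends in a bivalent configuration (otherwise the
profile would stay bivalent forever, and a node that is not stable at it would force a single
limit). Alternating the two while cycling through the nodes gives a fair run that never becomes
constant.
-/

theorem Set.Subsingleton.eq_of_inter_nonempty {α : Type*} {X Y : Set α} (hX : X.Subsingleton)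
    (hY : Y.Subsingleton) (h : (X ∩ Y).Nonempty) : X = Y := by
  obtain ⟨x, hxX, hxY⟩ := h
  rw [hX.eq_singleton_of_mem hxX, hY.eq_singleton_of_mem hxY]

namespace NonstationaryDynamics

open Finset Function

theorem apply_eq_of_forall_update {ι : Type*} [Fintype ι] [DecidableEq ι] {β : ι → Type*}
    {γ : Type*} (g : (∀ i, β i) → γ) (hg : ∀ x i v, g (update x i v) = g x)
    (a b : ∀ i, β i) : g a = g b := by
  suffices h : ∀ X : Finset ι, g (X.piecewise b a) = g a by
    rw [← h univ, piecewise_univ]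
  intro X
  induction X using Finset.induction_on with
  | empty => rw [piecewise_empty]
  | insert k X _ ih => rw [piecewise_insert, hg, ih]

theorem exists_seq_of_forall_exists {α : Type*} {P : α → Prop} {R : ℕ → α → α → Prop} {a : α}
    (ha : P a) (h : ∀ r a, P a → ∃ b, P b ∧ R r a b) :
    ∃ x : ℕ → α, ∀ r, P (x r) ∧ R r (x r) (x (r + 1)) := by
  choose g hgP hgR using h
  let y : ℕ → {a // P a} := fun r =>
    Nat.rec ⟨a, ha⟩ (fun r b => ⟨g r b.1 b.2, hgP r b.1 b.2⟩) r
  exact ⟨fun r => (y r).1, fun r => ⟨(y r).2, hgR r _ _⟩⟩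

theorem diag_eq_of_agree {β : Type*} {σ : ℕ → ℕ → β} {t : ℕ → ℕ} (ht : StrictMono t)
    (h : ∀ r v, v ≤ t r → σ (r + 1) v = σ r v) {r v : ℕ} (hv : v ≤ t r) : σ v v = σ r v := by
  have hmono : ∀ r r', r ≤ r' → ∀ v, v ≤ t r → σ r' v = σ r v := by
    intro r r' hr
    induction r', hr using Nat.le_induction with
    | base => exact fun _ _ => rfl
    | succ r' hr ih => exact fun v hv => (h r' v (hv.trans (ht.monotone hr))).trans (ih v hv)
  rcases le_total v r with hvr | hrv
  · exact (hmono v r hvr v (ht.id_le v)).symm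
  · exact hmono r v hrv v hv

def splice {β : Type*} (σ : ℕ → β) (t : ℕ) (τ : ℕ → β) : ℕ → β :=
  fun v => if v ≤ t then σ v else τ v

section Schedules

variable {n : ℕ} {σ τ : ℕ → Finset (Fin n)}

theorem fair_univ : Fair (fun _ => (univ : Finset (Fin n))) :=
  fun i N => ⟨N, le_rfl, mem_univ i⟩

theorem fair_of_eq_of_le (M : ℕ) (h : ∀ u, M ≤ u → σ u = τ u) (hτ : Fair τ) : Fair σ := by
  intro i N
  obtain ⟨u, hu, hi⟩ := hτ i (max N M)
  exact ⟨u, le_of_max_le_left hu, h u (le_of_max_le_right hu) ▸ hi⟩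

theorem fair_splice (m : ℕ) (hτ : Fair τ) : Fair (splice σ m τ) :=
  fair_of_eq_of_le (m + 1) (fun _ hu => if_neg (by omega)) hτ

theorem splice_nonempty (hσ : ∀ v, (σ v).Nonempty) (hτ : ∀ v, (τ v).Nonempty) (m v : ℕ) :
    (splice σ m τ v).Nonempty := by
  unfold splice
  split_ifs
  exacts [hσ v, hτ v]

theorem update_nonempty (hτ : ∀ v, (τ v).Nonempty) {S : Finset (Fin n)} (hS : S.Nonempty)
    (m v : ℕ) : (update τ m S v).Nonempty := by
  rw [update_apply]
  split_ifs
  exacts [hS, hτ v]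

end Schedules

variable {n : ℕ} {A : Fin n → Type*} {f : ℕ → ∀ i : Fin n, (∀ j, A j) → A i}

def react (f : ℕ → ∀ i : Fin n, (∀ j, A j) → A i) (t : ℕ) (S : Finset (Fin n))
    (s : ∀ j, A j) : ∀ j, A j :=
  S.piecewise (fun i => f t i s) s

/-- `run f s t τ u` is the profile at time `t + u` of the dynamics that is at `s` at time `t`. -/
def run (f : ℕ → ∀ i : Fin n, (∀ j, A j) → A i) (s : ∀ j, A j) (t : ℕ)
    (τ : ℕ → Finset (Fin n)) : ℕ → ∀ j, A j
  | 0 => s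
  | u + 1 => react f (t + u + 1) (τ (t + u + 1)) (run f s t τ u)

section Runs

variable {s : ∀ j, A j} {t : ℕ} {τ τ' : ℕ → Finset (Fin n)}

theorem react_apply_of_notMem {S : Finset (Fin n)} {i : Fin n} (hi : i ∉ S) :
    react f t S s i = s i :=
  piecewise_eq_of_notMem _ _ _ hi

theorem react_insert_apply_of_ne {S : Finset (Fin n)} {i k : Fin n} (h : i ≠ k) :
    react f t (insert k S) s i = react f t S s i :=
  piecewise_insert_of_ne _ _ _ h

theorem react_eq_self {S : Finset (Fin n)} (h : ∀ i ∈ S, f t i s = s i) : react f t S s = s := by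
  funext i
  by_cases hi : i ∈ S
  · rw [react, piecewise_eq_of_mem _ _ _ hi, h i hi]
  · exact react_apply_of_notMem hi

theorem react_singleton_eq {s' : ∀ j, A j} {k : Fin n} (hk : SelfIndependent k (f t k))
    (h : ∀ i, i ≠ k → s i = s' i) : react f t {k} s = react f t {k} s' := by
  funext i
  by_cases hi : i = k
  · subst hi
    simp only [react, piecewise_singleton, update_self]
    exact hk s s' h
  · rw [react_apply_of_notMem (by simpa using hi), react_apply_of_notMem (by simpa using hi)]
    exact h i hi

theorem run_succ (u : ℕ) :
    run f s t τ (u + 1) = react f (t + u + 1) (τ (t + u + 1)) (run f s t τ u) := rfl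

theorem run_congr {u : ℕ} (h : ∀ v, t < v → v ≤ t + u → τ v = τ' v) :
    run f s t τ u = run f s t τ' u := by
  induction u with
  | zero => rfl
  | succ u ih =>
    rw [run_succ, run_succ, ih fun v h₁ h₂ => h v h₁ (by omega), h _ (by omega) (by omega)]

theorem run_add (v u : ℕ) : run f s t τ (v + u) = run f (run f s t τ v) (t + v) τ u := by
  induction u with
  | zero => rfl
  | succ u ih => rw [← add_assoc, run_succ, run_succ, ih, add_assoc t v u]

theorem run_splice_add (m u : ℕ) :
    run f s t (splice τ (t + m) τ') (m + u) = run f (run f s t τ m) (t + m) τ' u := by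
  have hprefix : run f s t (splice τ (t + m) τ') m = run f s t τ m :=
    run_congr fun v _ hv => if_pos hv
  rw [run_add, hprefix]
  exact run_congr fun v hv _ => if_neg (by omega)

theorem run_update_of_le {u w : ℕ} (S : Finset (Fin n)) (hw : w ≤ u) :
    run f s t (update τ (t + u + 1) S) w = run f s t τ w :=
  run_congr fun _ _ hv => update_of_ne (by omega) _ _

theorem run_update_succ (u : ℕ) (S : Finset (Fin n)) :
    run f s t (update τ (t + u + 1) S) (u + 1) = react f (t + u + 1) S (run f s t τ u) := by
  rw [run_succ, update_self, run_update_of_le S le_rfl]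

theorem run_eq_self_of_stable {u : ℕ}
    (h : ∀ w < u, ∀ i ∈ τ (t + w + 1), f (t + w + 1) i s = s i) : run f s t τ u = s := by
  induction u with
  | zero => rfl
  | succ u ih =>
    rw [run_succ, ih fun w hw => h w (by omega)]
    exact react_eq_self (h u (by omega))

theorem run_singleton_apply_of_ne {i k : Fin n} (hi : i ≠ k) (u : ℕ) :
    run f s t (fun _ => {k}) u i = s i := by
  induction u with
  | zero => rfl
  | succ u ih => rw [run_succ, react_apply_of_notMem (by simpa using hi), ih]

/-- While only `k` moves, the other nodes keep their actions in `s`, so by self-independence the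
last reaction of `k` is its reaction to `s`. -/
theorem run_singleton_succ_eq_self {k : Fin n} {u : ℕ} (hk : SelfIndependent k (f (t + u + 1) k))
    (hs : f (t + u + 1) k s = s k) : run f s t (fun _ => {k}) (u + 1) = s := by
  rw [run_succ, react_singleton_eq hk fun i hi => run_singleton_apply_of_ne hi u]
  exact react_eq_self (by simpa using hs)

theorem dynamicsT_eq_run (s₀ : ∀ j, A j) (σ : ℕ → Finset (Fin n)) (u : ℕ) :
    dynamicsT f s₀ σ u = run f s₀ 0 σ u := by
  induction u with
  | zero => rfl
  | succ u ih => rw [run_succ, zero_add, ← ih]; rfl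

theorem dynamicsT_congr {s₀ : ∀ j, A j} {σ σ' : ℕ → Finset (Fin n)} {w : ℕ}
    (h : ∀ v, v ≤ w → σ v = σ' v) : dynamicsT f s₀ σ w = dynamicsT f s₀ σ' w := by
  rw [dynamicsT_eq_run, dynamicsT_eq_run]
  exact run_congr fun v _ hv => h v (by omega)

theorem dynamicsT_splice_add (s₀ : ∀ j, A j) (σ τ : ℕ → Finset (Fin n)) (t u : ℕ) :
    dynamicsT f s₀ (splice σ t τ) (t + u) = run f (dynamicsT f s₀ σ t) t τ u := by
  have h := run_splice_add (f := f) (s := s₀) (t := 0) (τ := σ) (τ' := τ) t u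
  rw [zero_add] at h
  rw [dynamicsT_eq_run, dynamicsT_eq_run, h]

end Runs

def Reachable (f : ℕ → ∀ i : Fin n, (∀ j, A j) → A i) (s : ∀ j, A j) (t : ℕ) : Prop :=
  ∃ (s₀ : ∀ j, A j) (σ : ℕ → Finset (Fin n)), (∀ v, (σ v).Nonempty) ∧ dynamicsT f s₀ σ t = s

def limits (f : ℕ → ∀ i : Fin n, (∀ j, A j) → A i) (s : ∀ j, A j) (t : ℕ) : Set (∀ j, A j) :=
  {L | ∃ τ : ℕ → Finset (Fin n), (∀ v, (τ v).Nonempty) ∧ Fair τ ∧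
    ∃ u₀, ∀ u, u₀ ≤ u → run f s t τ u = L}

def Bivalent (f : ℕ → ∀ i : Fin n, (∀ j, A j) → A i) (s : ∀ j, A j) (t : ℕ) : Prop :=
  Reachable f s t ∧ (limits f s t).Nontrivial

def HasLimits (f : ℕ → ∀ i : Fin n, (∀ j, A j) → A i) : Prop :=
  ∀ s t, Reachable f s t → (limits f s t).Nonempty

def Safe (f : ℕ → ∀ i : Fin n, (∀ j, A j) → A i) : Prop :=
  ∀ (s₀ : ∀ j, A j) (σ : ℕ → Finset (Fin n)),
    (∀ t, (σ t).Nonempty) → Fair σ → EventuallyConstant (dynamicsT f s₀ σ)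

section Limits

variable {s : ∀ j, A j} {t : ℕ} {τ : ℕ → Finset (Fin n)}

theorem reachable_zero [NeZero n] (s : ∀ j, A j) : Reachable f s 0 :=
  ⟨s, fun _ => univ, fun _ => univ_nonempty, rfl⟩

theorem Reachable.run (hr : Reachable f s t) (hτ : ∀ v, (τ v).Nonempty) (u : ℕ) :
    Reachable f (run f s t τ u) (t + u) := by
  obtain ⟨s₀, σ, hσ, rfl⟩ := hr
  exact ⟨s₀, splice σ t τ, splice_nonempty hσ hτ t, dynamicsT_splice_add ..⟩

theorem Reachable.react (hr : Reachable f s t) {S : Finset (Fin n)} (hS : S.Nonempty) :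
    Reachable f (react f (t + 1) S s) (t + 1) :=
  hr.run (τ := fun _ => S) (fun _ => hS) 1

theorem Reachable.subsingleton_limits (hr : Reachable f s t) (hb : ¬ Bivalent f s t) :
    (limits f s t).Subsingleton :=
  Set.not_nontrivial_iff.mp fun h => hb ⟨hr, h⟩

theorem Safe.hasLimits [NeZero n] (H : Safe f) : HasLimits f := by
  rintro s t ⟨s₀, σ, hσ, rfl⟩
  obtain ⟨t₀, ht₀⟩ :=
    H s₀ _ (splice_nonempty hσ (fun _ => univ_nonempty) t) (fair_splice t fair_univ)
  refine ⟨dynamicsT f s₀ (splice σ t fun _ => univ) t₀, fun _ => univ, fun _ => univ_nonempty,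
    fair_univ, t₀, fun u hu => ?_⟩
  rw [← dynamicsT_splice_add]
  exact ht₀ _ (by omega)

theorem mem_limits_run {L : ∀ j, A j} (hτ : ∀ v, (τ v).Nonempty) (hfair : Fair τ) {u₀ : ℕ}
    (hL : ∀ u, u₀ ≤ u → run f s t τ u = L) (v : ℕ) : L ∈ limits f (run f s t τ v) (t + v) :=
  ⟨τ, hτ, hfair, u₀, fun u hu => by rw [← run_add]; exact hL _ (by omega)⟩

theorem limits_run_subset (hτ : ∀ v, (τ v).Nonempty) (u : ℕ) :
    limits f (run f s t τ u) (t + u) ⊆ limits f s t := by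
  rintro L ⟨τ', hτ', hfair, u₀, hL⟩
  refine ⟨splice τ (t + u) τ', splice_nonempty hτ hτ' _, fair_splice _ hfair, u + u₀,
    fun w hw => ?_⟩
  obtain ⟨w, rfl⟩ := Nat.exists_eq_add_of_le hw
  rw [add_assoc, run_splice_add]
  exact hL _ (by omega)

theorem limits_react_subset {S : Finset (Fin n)} (hS : S.Nonempty) :
    limits f (react f (t + 1) S s) (t + 1) ⊆ limits f s t :=
  limits_run_subset (τ := fun _ => S) (fun _ => hS) 1

theorem limits_react_singleton_subset {s' : ∀ j, A j} {k : Fin n}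
    (hk : SelfIndependent k (f (t + 1) k)) (h : ∀ i, i ≠ k → s i = s' i) :
    limits f (react f (t + 1) {k} s) (t + 1) ⊆ limits f s' t := by
  rw [react_singleton_eq hk h]
  exact limits_react_subset (singleton_nonempty k)

theorem HasLimits.inter_nonempty (H : HasLimits f) (hsi : ∀ t i, SelfIndependent i (f t i))
    {s' : ∀ j, A j} {k : Fin n} (hr : Reachable f s t) (h : ∀ i, i ≠ k → s i = s' i) :
    (limits f s t ∩ limits f s' t).Nonempty := by
  obtain ⟨L, hL⟩ := H _ _ (hr.react (singleton_nonempty k))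
  exact ⟨L, limits_react_subset (singleton_nonempty k) hL,
    limits_react_singleton_subset (hsi _ k) h hL⟩

/-- The reactions of `T` and of `insert k T` differ only at `k`, so they share a limit. -/
theorem HasLimits.limits_react_eq_univ (H : HasLimits f) (hsi : ∀ t i, SelfIndependent i (f t i))
    (hr : Reachable f s t) {S : Finset (Fin n)} (hS : S.Nonempty)
    (huni : ∀ T, S ⊆ T → (limits f (react f (t + 1) T s) (t + 1)).Subsingleton) :
    limits f (react f (t + 1) S s) (t + 1) = limits f (react f (t + 1) univ s) (t + 1) := by
  suffices h : ∀ X : Finset (Fin n),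
      limits f (react f (t + 1) (S ∪ X) s) (t + 1) = limits f (react f (t + 1) S s) (t + 1) by
    rw [← h univ, union_eq_right.mpr (subset_univ S)]
  intro X
  induction X using Finset.induction_on with
  | empty => rw [union_empty]
  | insert k X _ ih =>
    rw [union_insert, ← ih]
    refine ((huni _ subset_union_left).eq_of_inter_nonempty
      (huni _ (subset_union_left.trans (subset_insert _ _))) ?_).symm
    exact H.inter_nonempty hsi (hr.react (hS.mono subset_union_left))
      fun i hi => (react_insert_apply_of_ne hi).symm

end Limits

section Bivalence

variable {s : ∀ j, A j} {t : ℕ}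

/-- Along any run from `(s, t)`, all reactions involving `j` have the limit of the reaction of all
nodes at `t + 1`: the lone reaction of `j` after a step merges with that step enlarged by `j`.
A fair run eventually lets `j` react, so its limit is that one too. -/
theorem HasLimits.subsingleton_limits_of_react_mem (H : HasLimits f)
    (hsi : ∀ t i, SelfIndependent i (f t i)) (hr : Reachable f s t) (j : Fin n)
    (huni : ∀ τ : ℕ → Finset (Fin n), (∀ v, (τ v).Nonempty) → ∀ u S, j ∈ S →
      (limits f (react f (t + u + 1) S (run f s t τ u)) (t + u + 1)).Subsingleton) :
    (limits f s t).Subsingleton := by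
  set W := limits f (react f (t + 1) univ s) (t + 1)
  have hW : W.Subsingleton := huni (fun _ => univ) (fun _ => ⟨j, mem_univ j⟩) 0 univ (mem_univ j)
  have key : ∀ τ : ℕ → Finset (Fin n), (∀ v, (τ v).Nonempty) → ∀ u S, j ∈ S →
      limits f (react f (t + u + 1) S (run f s t τ u)) (t + u + 1) = W := by
    intro τ hτ u
    induction u with
    | zero =>
      exact fun S hS => H.limits_react_eq_univ hsi hr ⟨j, hS⟩ fun T hT => huni τ hτ 0 T (hT hS)
    | succ u ih =>
      intro S hS
      have hr' := hr.run hτ (u + 1)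
      rw [H.limits_react_eq_univ hsi hr' ⟨j, hS⟩ fun T hT => huni τ hτ _ T (hT hS),
        ← H.limits_react_eq_univ hsi hr' (singleton_nonempty j)
          fun T hT => huni τ hτ _ T (hT (mem_singleton_self j)),
        ← ih _ (mem_insert_self j (τ (t + u + 1)))]
      have hsub : limits f (react f (t + (u + 1) + 1) {j} (run f s t τ (u + 1))) (t + (u + 1) + 1)
          ⊆ limits f (react f (t + u + 1) (insert j (τ (t + u + 1))) (run f s t τ u)) (t + u + 1) :=
        limits_react_singleton_subset (hsi _ j) fun i hi => (react_insert_apply_of_ne hi).symm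
      have hY := huni τ hτ u _ (mem_insert_self j (τ (t + u + 1)))
      obtain ⟨L, hL⟩ := H _ _ (hr'.react (singleton_nonempty j))
      exact (hY.anti hsub).eq_of_inter_nonempty hY ⟨L, hL, hsub hL⟩
  refine hW.anti fun L ⟨τ, hτ, hfair, u₀, hL⟩ => ?_
  obtain ⟨t', ht', hj⟩ := hfair j (t + 1)
  obtain ⟨m, rfl⟩ : ∃ m, t' = t + m + 1 := ⟨t' - t - 1, by omega⟩
  rw [← key τ hτ m _ hj]
  exact mem_limits_run hτ hfair hL (m + 1)

theorem Bivalent.exists_bivalent_run_mem (H : HasLimits f) (hsi : ∀ t i, SelfIndependent i (f t i))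
    (hb : Bivalent f s t) (j : Fin n) :
    ∃ (τ : ℕ → Finset (Fin n)) (u : ℕ), (∀ v, (τ v).Nonempty) ∧
      (∃ w, 0 < w ∧ w ≤ u ∧ j ∈ τ (t + w)) ∧ Bivalent f (run f s t τ u) (t + u) := by
  by_contra! hC
  refine hb.2.not_subsingleton (H.subsingleton_limits_of_react_mem hsi hb.1 j ?_)
  intro τ hτ u S hS
  have hτ' := update_nonempty hτ ⟨j, hS⟩ (t + u + 1)
  have hnb := hC _ (u + 1) hτ' ⟨u + 1, by omega, le_rfl, by
    show j ∈ update τ (t + u + 1) S (t + u + 1)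
    rwa [update_self]⟩
  rw [run_update_succ] at hnb
  exact ((hb.1.run hτ u).react ⟨j, hS⟩).subsingleton_limits hnb

theorem Bivalent.exists_bivalent_react [NeZero n] (H : HasLimits f)
    (hsi : ∀ t i, SelfIndependent i (f t i)) (hb : Bivalent f s t) :
    ∃ S : Finset (Fin n), S.Nonempty ∧ Bivalent f (react f (t + 1) S s) (t + 1) := by
  obtain ⟨τ, u, hτ, ⟨w, hw, hwu, -⟩, hbu⟩ := hb.exists_bivalent_run_mem H hsi 0
  refine ⟨τ (t + 1), hτ _, hb.1.react (hτ _), hbu.2.mono ?_⟩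
  obtain ⟨v, rfl⟩ : ∃ v, u = 1 + v := ⟨u - 1, by omega⟩
  rw [run_add, ← add_assoc]
  exact limits_run_subset hτ v

/-- If `k` were stable at `s` at time `t + 2`, its lone reactions at `t + 1` and `t + 2` would lead
back to `s`. -/
theorem ne_of_subsingleton_limits_react_singleton {k : Fin n}
    (hk : SelfIndependent k (f (t + 1 + 1) k))
    (huni : (limits f (react f (t + 1) {k} s) (t + 1)).Subsingleton)
    (hnt : (limits f s (t + 1 + 1)).Nontrivial) : f (t + 1 + 1) k s ≠ s k := by
  intro hstable
  have hsub := limits_react_singleton_subset (s := s) (s' := react f (t + 1) {k} s) hk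
    fun i hi => (react_apply_of_notMem (by simpa using hi)).symm
  rw [react_eq_self (by simpa using hstable)] at hsub
  exact hnt.not_subsingleton (huni.anti hsub)

theorem HasLimits.limits_react_singleton_succ (H : HasLimits f)
    (hsi : ∀ t i, SelfIndependent i (f t i)) (hr : Reachable f s (t + 1)) {k : Fin n}
    (huni : (limits f (react f (t + 1) {k} s) (t + 1)).Subsingleton)
    (huni' : (limits f (react f (t + 1 + 1) {k} s) (t + 1 + 1)).Subsingleton) :
    limits f (react f (t + 1 + 1) {k} s) (t + 1 + 1) =
      limits f (react f (t + 1) {k} s) (t + 1) := by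
  have hsub := limits_react_singleton_subset (s := s) (s' := react f (t + 1) {k} s) (t := t + 1)
    (hsi _ k) fun i hi => (react_apply_of_notMem (by simpa using hi)).symm
  obtain ⟨L, hL⟩ := H _ _ (hr.react (singleton_nonempty k))
  exact huni'.eq_of_inter_nonempty huni ⟨L, hL, hsub hL⟩

/-- A fair run stays at `s` until a node that is not stable at `s` reacts. -/
theorem exists_mem_limits_react_of_not_stable {k : Fin n}
    (hk : ∀ t', t ≤ t' → f (t' + 1) k s ≠ s k) {L : ∀ j, A j} (hL : L ∈ limits f s t) :
    ∃ t', t ≤ t' ∧ ∃ S : Finset (Fin n), (∃ i ∈ S, f (t' + 1) i s ≠ s i) ∧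
      L ∈ limits f (react f (t' + 1) S s) (t' + 1) := by
  classical
  obtain ⟨τ, hτ, hfair, u₀, hlim⟩ := hL
  have hex : ∃ m, ∃ i ∈ τ (t + m + 1), f (t + m + 1) i s ≠ s i := by
    obtain ⟨t', ht', hkt⟩ := hfair k (t + 1)
    exact ⟨t' - t - 1, k, by rwa [show t + (t' - t - 1) + 1 = t' by omega], hk _ (by omega)⟩
  have hstay : run f s t τ (Nat.find hex) = s :=
    run_eq_self_of_stable fun w hw i hi => by
      by_contra h
      exact Nat.find_min hex hw ⟨i, hi, h⟩
  refine ⟨t + Nat.find hex, by omega, τ (t + Nat.find hex + 1), Nat.find_spec hex, ?_⟩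
  have hmem := mem_limits_run hτ hfair hlim (Nat.find hex + 1)
  rwa [run_succ, hstay] at hmem

theorem exists_not_stable_of_nontrivial (hnt : (limits f s t).Nontrivial) :
    ∃ t', t ≤ t' ∧ ∃ k, f (t' + 1) k s ≠ s k := by
  by_contra! hst
  refine hnt.not_subsingleton fun L ⟨τ, _, _, u₀, hL⟩ L' ⟨τ', _, _, u₀', hL'⟩ => ?_
  rw [← hL u₀ le_rfl, ← hL' u₀' le_rfl, run_eq_self_of_stable fun w _ i _ => hst _ (by omega) i,
    run_eq_self_of_stable fun w _ i _ => hst _ (by omega) i]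

theorem HasLimits.exists_bivalent_react_of_forall_bivalent (H : HasLimits f)
    (hsi : ∀ t i, SelfIndependent i (f t i)) (hbiv : ∀ t', t ≤ t' → Bivalent f s t') :
    ∃ t', t ≤ t' ∧ ∃ S : Finset (Fin n), (∃ i ∈ S, f (t' + 1) i s ≠ s i) ∧
      Bivalent f (react f (t' + 1) S s) (t' + 1) := by
  -- Otherwise the reactions moving a node not stable at `s` are univalent. A node `k` that is not
  -- stable stays so, the limit of its lone reaction does not depend on the time, and every limit
  -- of `s` is reached through such a reaction.
  by_contra! hC
  have huni : ∀ t', t ≤ t' → ∀ (S : Finset (Fin n)) (i : Fin n), i ∈ S → f (t' + 1) i s ≠ s i →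
      (limits f (react f (t' + 1) S s) (t' + 1)).Subsingleton := fun t' ht' S i hi hne =>
    ((hbiv t' ht').1.react ⟨i, hi⟩).subsingleton_limits (hC t' ht' S ⟨i, hi, hne⟩)
  have hval : ∀ t', t ≤ t' → ∀ (S : Finset (Fin n)) (i : Fin n), i ∈ S → f (t' + 1) i s ≠ s i →
      limits f (react f (t' + 1) S s) (t' + 1) = limits f (react f (t' + 1) univ s) (t' + 1) :=
    fun t' ht' S i hi hne => H.limits_react_eq_univ hsi (hbiv t' ht').1 ⟨i, hi⟩
      fun T hT => huni t' ht' T i (hT hi) hne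
  obtain ⟨t₂, ht₂, k, hk⟩ := exists_not_stable_of_nontrivial (hbiv t le_rfl).2
  have hkall : ∀ t', t₂ ≤ t' → f (t' + 1) k s ≠ s k := by
    intro t' ht'
    induction t', ht' using Nat.le_induction with
    | base => exact hk
    | succ t' ht' ih =>
      exact ne_of_subsingleton_limits_react_singleton (hsi _ k)
        (huni t' (by omega) {k} k (mem_singleton_self k) ih) (hbiv _ (by omega)).2
  have hconst : ∀ t', t₂ ≤ t' → limits f (react f (t' + 1) {k} s) (t' + 1) =
      limits f (react f (t₂ + 1) {k} s) (t₂ + 1) := by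
    intro t' ht'
    induction t', ht' using Nat.le_induction with
    | base => rfl
    | succ t' ht' ih =>
      rw [← ih]
      exact H.limits_react_singleton_succ hsi (hbiv _ (by omega)).1
        (huni t' (by omega) {k} k (mem_singleton_self k) (hkall t' ht'))
        (huni _ (by omega) {k} k (mem_singleton_self k) (hkall _ (by omega)))
  refine (hbiv t₂ ht₂).2.not_subsingleton
    ((huni t₂ ht₂ {k} k (mem_singleton_self k) hk).anti fun L hL => ?_)
  obtain ⟨t', ht', S, ⟨i, hi, hne⟩, hL⟩ := exists_mem_limits_react_of_not_stable hkall hL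
  rwa [hval t' (by omega) S i hi hne,
    ← hval t' (by omega) {k} k (mem_singleton_self k) (hkall t' ht'), hconst t' ht'] at hL

theorem Bivalent.exists_bivalent_run_ne [NeZero n] (H : HasLimits f)
    (hsi : ∀ t i, SelfIndependent i (f t i)) (hb : Bivalent f s t) :
    ∃ (τ : ℕ → Finset (Fin n)) (u : ℕ), (∀ v, (τ v).Nonempty) ∧
      (∃ w, w ≤ u ∧ run f s t τ w ≠ s) ∧ Bivalent f (run f s t τ u) (t + u) := by
  -- Otherwise every bivalent successor of `s` is `s` itself, so `s` is bivalent at all later times.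
  by_contra! hC
  have hstay : ∀ d, ∃ τ : ℕ → Finset (Fin n), (∀ v, (τ v).Nonempty) ∧
      (∀ w, w ≤ d → run f s t τ w = s) ∧ Bivalent f s (t + d) := by
    intro d
    induction d with
    | zero =>
      exact ⟨fun _ => univ, fun _ => univ_nonempty, fun w hw => by rw [Nat.le_zero.mp hw]; rfl, hb⟩
    | succ d ih =>
      obtain ⟨τ, hτ, hs, hbd⟩ := ih
      obtain ⟨S, hS, hbS⟩ := hbd.exists_bivalent_react H hsi
      have hrun : run f s t (update τ (t + d + 1) S) (d + 1) = react f (t + d + 1) S s := by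
        rw [run_update_succ, hs d le_rfl]
      have hS_eq : react f (t + d + 1) S s = s := by
        by_contra hne
        exact hC _ (d + 1) (update_nonempty hτ hS _) ⟨d + 1, le_rfl, hrun ▸ hne⟩ (hrun ▸ hbS)
      refine ⟨update τ (t + d + 1) S, update_nonempty hτ hS _, fun w hw => ?_, hS_eq ▸ hbS⟩
      rcases Nat.lt_or_eq_of_le hw with hw | rfl
      · rw [run_update_of_le S (by omega)]
        exact hs w (by omega)
      · rw [hrun, hS_eq]
  have hbiv : ∀ t', t ≤ t' → Bivalent f s t' := fun t' ht' => by
    obtain ⟨d, rfl⟩ := Nat.exists_eq_add_of_le ht'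
    obtain ⟨-, -, -, hbd⟩ := hstay d
    exact hbd
  obtain ⟨t', ht', S, ⟨i, hi, hne⟩, hbS⟩ := H.exists_bivalent_react_of_forall_bivalent hsi hbiv
  obtain ⟨d, rfl⟩ := Nat.exists_eq_add_of_le ht'
  obtain ⟨τ, hτ, hs, -⟩ := hstay d
  have hrun : run f s t (update τ (t + d + 1) S) (d + 1) = react f (t + d + 1) S s := by
    rw [run_update_succ, hs d le_rfl]
  refine hC _ (d + 1) (update_nonempty hτ ⟨i, hi⟩ _) ⟨d + 1, le_rfl, fun h => hne ?_⟩ (hrun ▸ hbS)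
  rw [← congrFun (hrun.symm.trans h) i, react, piecewise_eq_of_mem _ _ _ hi]

theorem exists_bivalent_extension [NeZero n] (H : HasLimits f)
    (hsi : ∀ t i, SelfIndependent i (f t i)) {s₀ : ∀ j, A j} {σ : ℕ → Finset (Fin n)}
    (hσ : ∀ v, (σ v).Nonempty) (hb : Bivalent f (dynamicsT f s₀ σ t) t) (j : Fin n) :
    ∃ (σ' : ℕ → Finset (Fin n)) (t' : ℕ), (∀ v, (σ' v).Nonempty) ∧
      Bivalent f (dynamicsT f s₀ σ' t') t' ∧ (∀ v, v ≤ t → σ' v = σ v) ∧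
      (∃ w, t < w ∧ w ≤ t' ∧ j ∈ σ' w) ∧
      (∃ w, t < w ∧ w ≤ t' ∧ dynamicsT f s₀ σ' w ≠ dynamicsT f s₀ σ' t) := by
  obtain ⟨τ₁, u₁, hτ₁, ⟨w₁, hw₁, hne⟩, hb₁⟩ := hb.exists_bivalent_run_ne H hsi
  obtain ⟨τ₂, u₂, hτ₂, ⟨w₂, hw₂, hw₂u, hj⟩, hb₂⟩ := hb₁.exists_bivalent_run_mem H hsi j
  set σ₁ := splice σ t τ₁
  have hrun₁ : ∀ w, dynamicsT f s₀ σ₁ (t + w) = run f (dynamicsT f s₀ σ t) t τ₁ w :=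
    dynamicsT_splice_add s₀ σ τ₁ t
  have hrun₂ : ∀ w, dynamicsT f s₀ (splice σ₁ (t + u₁) τ₂) (t + u₁ + w) =
      run f (run f (dynamicsT f s₀ σ t) t τ₁ u₁) (t + u₁) τ₂ w := fun w => by
    rw [dynamicsT_splice_add, hrun₁]
  have hprefix : ∀ w, w ≤ t + u₁ →
      dynamicsT f s₀ (splice σ₁ (t + u₁) τ₂) w = dynamicsT f s₀ σ₁ w :=
    fun w hw => dynamicsT_congr fun v hv => if_pos (hv.trans hw)
  have hw₁0 : w₁ ≠ 0 := by rintro rfl; exact hne rfl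
  refine ⟨splice σ₁ (t + u₁) τ₂, t + u₁ + u₂,
    splice_nonempty (splice_nonempty hσ hτ₁ t) hτ₂ _, by rw [hrun₂]; exact hb₂,
    fun v hv => by simp only [splice, σ₁, if_pos hv, if_pos (hv.trans (Nat.le_add_right t u₁))],
    ⟨t + u₁ + w₂, by omega, by omega, by rwa [splice, if_neg (by omega)]⟩,
    ⟨t + w₁, by omega, by omega, ?_⟩⟩
  have hstart : dynamicsT f s₀ σ₁ t = dynamicsT f s₀ σ t := hrun₁ 0
  rw [hprefix _ (by omega), hprefix _ (by omega), hrun₁, hstart]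
  exact hne

theorem fair_and_not_eventuallyConstant_diag [NeZero n] {s₀ : ∀ j, A j}
    {x : ℕ → ℕ × (ℕ → Finset (Fin n))}
    (hagree : ∀ r v, v ≤ (x r).1 → (x (r + 1)).2 v = (x r).2 v)
    (hact : ∀ r, ∃ w, (x r).1 < w ∧ w ≤ (x (r + 1)).1 ∧ Fin.ofNat n r ∈ (x (r + 1)).2 w)
    (hchange : ∀ r, ∃ w, (x r).1 < w ∧ w ≤ (x (r + 1)).1 ∧
      dynamicsT f s₀ (x (r + 1)).2 w ≠ dynamicsT f s₀ (x (r + 1)).2 (x r).1) :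
    Fair (fun v => (x v).2 v) ∧ ¬ EventuallyConstant (dynamicsT f s₀ fun v => (x v).2 v) := by
  have hmono : StrictMono fun r => (x r).1 := strictMono_nat_of_lt_succ fun r => by
    obtain ⟨w, hw, hw', -⟩ := hact r
    exact hw.trans_le hw'
  have hdiag : ∀ r w, w ≤ (x r).1 →
      dynamicsT f s₀ (fun v => (x v).2 v) w = dynamicsT f s₀ (x r).2 w := fun r w hw =>
    dynamicsT_congr fun v hv => diag_eq_of_agree (σ := fun r => (x r).2) hmono hagree (hv.trans hw)
  constructor
  · intro i N
    obtain ⟨w, hw, hw', hi⟩ := hact (n * N + i)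
    refine ⟨w, ?_, ?_⟩
    · have h₁ : n * N + i ≤ (x (n * N + i)).1 := hmono.id_le _
      have h₂ : N ≤ n * N := Nat.le_mul_of_pos_left N (Nat.pos_of_ne_zero (NeZero.ne n))
      omega
    · show i ∈ (x w).2 w
      rw [show (x w).2 w = (x (n * N + i + 1)).2 w from
        diag_eq_of_agree (σ := fun r => (x r).2) hmono hagree hw']
      rwa [show Fin.ofNat n (n * N + i) = i by ext; simp [Nat.mod_eq_of_lt i.isLt]] at hi
  · rintro ⟨t₀, ht₀⟩
    obtain ⟨w, hw, hw', hne⟩ := hchange t₀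
    have ht₀x : t₀ ≤ (x t₀).1 := hmono.id_le t₀
    rw [← hdiag _ w hw', ← hdiag _ _ (hmono (Nat.lt_succ_self t₀)).le, ht₀ w (by omega),
      ht₀ _ ht₀x] at hne
    exact hne rfl

theorem Safe.not_bivalent [NeZero n] (H : Safe f) (hsi : ∀ t i, SelfIndependent i (f t i))
    {s : ∀ j, A j} {t : ℕ} : ¬ Bivalent f s t := by
  intro hb
  obtain ⟨s₀, σ, hσ, rfl⟩ := hb.1
  obtain ⟨x, hx⟩ := exists_seq_of_forall_exists
    (P := fun p : ℕ × (ℕ → Finset (Fin n)) =>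
      (∀ v, (p.2 v).Nonempty) ∧ Bivalent f (dynamicsT f s₀ p.2 p.1) p.1)
    (R := fun r p q => (∀ v, v ≤ p.1 → q.2 v = p.2 v) ∧
      (∃ w, p.1 < w ∧ w ≤ q.1 ∧ Fin.ofNat n r ∈ q.2 w) ∧
      (∃ w, p.1 < w ∧ w ≤ q.1 ∧ dynamicsT f s₀ q.2 w ≠ dynamicsT f s₀ q.2 p.1))
    (a := (t, σ)) ⟨hσ, hb⟩ fun r p ⟨hp, hbp⟩ => by
      obtain ⟨σ', t', hσ', hb', hagree, hact, hchange⟩ :=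
        exists_bivalent_extension H.hasLimits hsi hp hbp (Fin.ofNat n r)
      exact ⟨(t', σ'), ⟨hσ', hb'⟩, hagree, hact, hchange⟩
  obtain ⟨hfair, hnc⟩ := fair_and_not_eventuallyConstant_diag (s₀ := s₀)
    (fun r => (hx r).2.1) (fun r => (hx r).2.2.1) (fun r => (hx r).2.2.2)
  exact hnc (H s₀ _ (fun v => (hx v).1.1 v) hfair)

theorem mem_limits_zero_of_stable [NeZero n] (hsi : ∀ t i, SelfIndependent i (f t i))
    {c : ∀ j, A j} {T : ℕ} (hc : ∀ t, T ≤ t → ∀ i, f t i c = c i) : c ∈ limits f c 0 := by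
  have hstay : c ∈ limits f c (T + 1) := ⟨fun _ => univ, fun _ => univ_nonempty, fair_univ, 0,
    fun u _ => run_eq_self_of_stable fun _ _ i _ => hc _ (by omega) i⟩
  have hrun : run f c 0 (fun _ => {0}) (T + 1) = c :=
    run_singleton_succ_eq_self (hsi _ 0) (hc _ (by omega) 0)
  have hsub := limits_run_subset (f := f) (s := c) (t := 0) (τ := fun _ => {0})
    (fun _ => singleton_nonempty 0) (T + 1)
  rw [hrun, zero_add] at hsub
  exact hsub hstay

theorem HasLimits.exists_bivalent_zero [NeZero n] (H : HasLimits f)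
    (hsi : ∀ t i, SelfIndependent i (f t i)) {a b : ∀ j, A j} (hab : a ≠ b)
    (ha : a ∈ limits f a 0) (hb : b ∈ limits f b 0) : ∃ s, Bivalent f s 0 := by
  by_contra! hno
  have huni : ∀ x, (limits f x 0).Subsingleton := fun x =>
    (reachable_zero x).subsingleton_limits (hno x)
  have hab' : limits f a 0 = limits f b 0 := apply_eq_of_forall_update (fun x => limits f x 0)
    (fun x k v => ((huni x).eq_of_inter_nonempty (huni _) (H.inter_nonempty hsi
      (reachable_zero x) fun i hi => (update_of_ne hi v x).symm)).symm) a b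
  exact hab (huni b (hab' ▸ ha) hb)

end Bivalence

end NonstationaryDynamics

open NonstationaryDynamics

theorem nonstationary_two_stable_states_not_safe_general
    {n : ℕ} {A : Fin n → Type*}
    (f : ℕ → ∀ i : Fin n, (∀ j, A j) → A i)
    (hsi : ∀ (t : ℕ) (i : Fin n), SelfIndependent i (f t i))
    (a b : ∀ j, A j) (hab : a ≠ b)
    (hstable : ∃ T : ℕ, ∀ t : ℕ, T ≤ t → ∀ i : Fin n,
      f t i a = a i ∧ f t i b = b i) :
    ∃ (s0 : ∀ j, A j) (σ : ℕ → Finset (Fin n)),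
      (∀ t, (σ t).Nonempty) ∧ Fair σ ∧
      ¬ EventuallyConstant (dynamicsT f s0 σ) := by
  have : NeZero n := ⟨by rintro rfl; exact hab (funext fun i => i.elim0)⟩
  obtain ⟨T, hT⟩ := hstable
  by_contra! hsafe
  have H : Safe f := hsafe
  obtain ⟨s, hs⟩ := H.hasLimits.exists_bivalent_zero hsi hab
    (mem_limits_zero_of_stable hsi fun t ht i => (hT t ht i).1)
    (mem_limits_zero_of_stable hsi fun t ht i => (hT t ht i).2)
  exact H.not_bivalent hsi hs

/-- A system with finite action spaces and deterministic,
self-independent, 1-recall (not necessarily stationary) reaction functions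
that has two distinct stable profiles is not safe. -/
theorem nonstationary_two_stable_states_not_safe
    {n : ℕ} {A : Fin n → Type*} [∀ i, Nonempty (A i)] [∀ i, Fintype (A i)]
    (f : ℕ → ∀ i : Fin n, (∀ j, A j) → A i)
    (hsi : ∀ (t : ℕ) (i : Fin n), SelfIndependent i (f t i))
    (a b : ∀ j, A j) (hab : a ≠ b)
    (hstable : ∃ T : ℕ, ∀ t : ℕ, T ≤ t → ∀ i : Fin n,
      f t i a = a i ∧ f t i b = b i) :
    ∃ (s0 : ∀ j, A j) (σ : ℕ → Finset (Fin n)),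
      (∀ t, (σ t).Nonempty) ∧ Fair σ ∧
      ¬ EventuallyConstant (dynamicsT f s0 σ) :=
  nonstationary_two_stable_states_not_safe_general f hsi a b hab hstable
end

section
/- Let a social network be a finite directed graph on vertex set {1,…,n} without self-loops in which every vertex has at least one out-neighbor ('friend'). Each user i has action space {X,Y}, and i's deterministic historyless (self-independent) reaction function selects technology X if at least half of i's friends currently use X, and selects Y otherwise. Then this system is not convergent: there exist an initial assignment of technologies and a fair schedule under which the diffusion dynamics is not eventually constant (it never reaches a stable global state). -/
/-- The majority reaction function of a user in a social network: user `i`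
adopts technology `X` (encoded `true`) iff at least half of `i`'s friends
currently use `X`; otherwise `i` adopts `Y` (encoded `false`). -/
def majorityReaction {n : ℕ} (Nb : Fin n → Finset (Fin n))
    (i : Fin n) (a : Fin n → Bool) : Bool :=
  decide ((Nb i).card ≤ 2 * ((Nb i).filter (fun j => a j = true)).card)

/-!
As in the Fischer–Lynch–Paterson impossibility proof, call a state bivalent if two distinct
stable states are reachable from it. If the system were convergent, every state would reach a
stable state. By self-independence, two states that differ only at node `i` coincide once `i`
alone reacts, so walking coordinatewise from one stable state to another passes a bivalent
state. From a bivalent state every node `i` can be made to react while staying among bivalent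
states: otherwise every stable state reachable from it would be reachable after `i` alone
reacts, a univalent state. Serving the nodes in turn yields a fair schedule along which every
state is bivalent, hence not stable, so the dynamics never settles. Both constant profiles are
stable for the majority rule, and without self-loops that rule is self-independent.
-/

variable {n : ℕ} {A : Fin n → Type*} (g : ∀ i : Fin n, (∀ j, A j) → A i)

def react (s : ∀ j, A j) (S : Finset (Fin n)) : ∀ j, A j :=
  fun i => if i ∈ S then g i s else s i

def Reaches : (∀ j, A j) → (∀ j, A j) → Prop :=
  Relation.ReflTransGen fun s s' => ∃ S, react g s S = s'

/-- As in FLP, `s` is univalent when this set is a subsingleton. -/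
def valence (s : ∀ j, A j) : Set (∀ j, A j) :=
  {t | Reaches g s t ∧ Stable g t}

def Bivalent (s : ∀ j, A j) : Prop :=
  (valence g s).Nontrivial

variable {g}

theorem dynamics_succ (s0 : ∀ j, A j) (σ : ℕ → Finset (Fin n)) (t : ℕ) :
    dynamics g s0 σ (t + 1) = react g (dynamics g s0 σ t) (σ (t + 1)) :=
  rfl

theorem react_of_stable {s : ∀ j, A j} (hs : Stable g s) (S : Finset (Fin n)) :
    react g s S = s := by
  funext i
  by_cases hi : i ∈ S <;> simp [react, hi, hs i]

theorem react_insert_of_ne (s : ∀ j, A j) (S : Finset (Fin n)) {i k : Fin n} (hk : k ≠ i) :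
    react g s (insert i S) k = react g s S k := by
  simp [react, hk]

theorem react_singleton_congr {i : Fin n} (hi : SelfIndependent i (g i)) {s s' : ∀ j, A j}
    (h : ∀ k, k ≠ i → s k = s' k) : react g s {i} = react g s' {i} := by
  funext k
  by_cases hk : k = i
  · subst hk
    simpa [react] using hi s s' h
  · simpa [react, hk] using h k hk

theorem Reaches.react (s : ∀ j, A j) (S : Finset (Fin n)) : Reaches g s (react g s S) :=
  .single ⟨S, rfl⟩

theorem reaches_dynamics (s0 : ∀ j, A j) (σ : ℕ → Finset (Fin n)) (t : ℕ) :
    Reaches g s0 (dynamics g s0 σ t) := by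
  induction t with
  | zero => exact .refl
  | succ t ih => exact ih.tail ⟨σ (t + 1), rfl⟩

theorem Reaches.eq_of_stable {s t : ∀ j, A j} (hs : Stable g s) (h : Reaches g s t) : t = s := by
  induction h with
  | refl => rfl
  | tail _ hstep ih =>
    obtain ⟨S, rfl⟩ := hstep
    rw [ih, react_of_stable hs]

theorem valence_of_stable {s : ∀ j, A j} (hs : Stable g s) : valence g s = {s} :=
  Set.eq_singleton_iff_unique_mem.mpr ⟨⟨.refl, hs⟩, fun _ ht => ht.1.eq_of_stable hs⟩

theorem valence_subset_of_reaches {s s' : ∀ j, A j} (h : Reaches g s s') :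
    valence g s' ⊆ valence g s :=
  fun _ ht => ⟨h.trans ht.1, ht.2⟩

theorem valence_eq_of_reaches {s s' : ∀ j, A j} (h : Reaches g s s')
    (hs : (valence g s).Subsingleton) (hs' : (valence g s').Nonempty) :
    valence g s' = valence g s := by
  obtain ⟨x, hx⟩ := hs'
  have hsub := valence_subset_of_reaches h
  exact hsub.antisymm fun y hy => hs (hsub hx) hy ▸ hx

theorem stable_dynamics_of_fair {s0 : ∀ j, A j} {σ : ℕ → Finset (Fin n)} (hσ : Fair σ)
    {t0 : ℕ} (h : ∀ t, t0 ≤ t → dynamics g s0 σ t = dynamics g s0 σ t0) :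
    Stable g (dynamics g s0 σ t0) := by
  intro i
  obtain ⟨_ | t, ht, hi⟩ := hσ i (t0 + 1)
  · omega
  calc g i (dynamics g s0 σ t0) = g i (dynamics g s0 σ t) := by rw [h t (by omega)]
    _ = dynamics g s0 σ (t + 1) i := by simp [dynamics_succ, react, hi]
    _ = dynamics g s0 σ t0 i := by rw [h (t + 1) (by omega)]

theorem valence_nonempty_of_convergent [NeZero n] (hg : Convergent g) (s : ∀ j, A j) :
    (valence g s).Nonempty := by
  have hfair : Fair fun _ => (Finset.univ : Finset (Fin n)) :=
    fun i N => ⟨N, le_rfl, Finset.mem_univ i⟩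
  obtain ⟨t0, ht0⟩ := hg s _ (fun _ => Finset.univ_nonempty) hfair
  exact ⟨_, reaches_dynamics s _ t0, stable_dynamics_of_fair hfair ht0⟩

theorem valence_congr (hg : ∀ i, SelfIndependent i (g i))
    (hV : ∀ s, (valence g s).Nonempty) {i : Fin n} {s s' : ∀ j, A j}
    (h : ∀ k, k ≠ i → s k = s' k)
    (hs : (valence g s).Subsingleton) (hs' : (valence g s').Subsingleton) :
    valence g s = valence g s' := by
  have hreact := react_singleton_congr (hg i) h
  rw [← valence_eq_of_reaches (Reaches.react s {i}) hs (hV _), hreact,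
    valence_eq_of_reaches (Reaches.react s' {i}) hs' (hV _)]

theorem valence_eq_of_forall_subsingleton (hg : ∀ i, SelfIndependent i (g i))
    (hV : ∀ s, (valence g s).Nonempty) (hsub : ∀ s, (valence g s).Subsingleton)
    (s s' : ∀ j, A j) : valence g s = valence g s' := by
  suffices ∀ D : Finset (Fin n), ∀ s s' : ∀ j, A j, (∀ k, k ∉ D → s k = s' k) →
      valence g s = valence g s' from this Finset.univ s s' (by simp)
  intro D
  induction D using Finset.induction_on with
  | empty => exact fun s s' h => congrArg _ (funext fun k => h k (Finset.notMem_empty k))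
  | insert i D _ ih =>
    intro s s' h
    rw [valence_congr hg hV (s' := Function.update s i (s' i))
      (fun k hk => (Function.update_of_ne hk _ _).symm) (hsub _) (hsub _)]
    refine ih _ _ fun k hk => ?_
    by_cases hki : k = i
    · subst hki; simp
    · simpa [hki] using h k (by simp [hki, hk])

theorem exists_bivalent (hg : ∀ i, SelfIndependent i (g i))
    (hV : ∀ s, (valence g s).Nonempty) {a b : ∀ j, A j} (ha : Stable g a) (hb : Stable g b)
    (hab : a ≠ b) :
    ∃ y, Bivalent g y := by
  by_contra! h
  have := valence_eq_of_forall_subsingleton hg hV (fun s => Set.not_nontrivial_iff.mp (h s)) a b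
  rw [valence_of_stable ha, valence_of_stable hb] at this
  exact hab (Set.singleton_eq_singleton_iff.mp this)

variable (g) in
def ReactsWithin (good : (∀ j, A j) → Prop) (i : Fin n) : ℕ → (∀ j, A j) → Prop
  | 0, _ => False
  | m + 1, y => ∃ S : Finset (Fin n), S.Nonempty ∧ good (react g y S) ∧
      (i ∈ S ∨ ReactsWithin good i m (react g y S))

section Crux

variable {i : Fin n} {z : ∀ j, A j}

theorem subsingleton_valence_react_of_mem (hz : ∀ m, ¬ ReactsWithin g (Bivalent g) i m z)
    {S : Finset (Fin n)} (hi : i ∈ S) : (valence g (react g z S)).Subsingleton :=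
  Set.not_nontrivial_iff.mp fun h => hz 1 ⟨S, ⟨i, hi⟩, h, .inl hi⟩

theorem not_reactsWithin_react (hz : ∀ m, ¬ ReactsWithin g (Bivalent g) i m z)
    {S : Finset (Fin n)} (hS : Bivalent g (react g z S)) (m : ℕ) :
    ¬ ReactsWithin g (Bivalent g) i m (react g z S) := by
  rcases S.eq_empty_or_nonempty with rfl | hne
  · exact hz m
  · exact fun h => hz (m + 1) ⟨S, hne, hS, .inr h⟩

theorem valence_react_of_mem (hg : ∀ i, SelfIndependent i (g i))
    (hV : ∀ s, (valence g s).Nonempty) (hz : ∀ m, ¬ ReactsWithin g (Bivalent g) i m z)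
    {S : Finset (Fin n)} (hi : i ∈ S) : valence g (react g z S) = valence g (react g z {i}) := by
  rw [← Finset.insert_erase hi]
  induction S.erase i using Finset.induction_on with
  | empty => rfl
  | insert j B _ ih =>
    rw [← ih, Finset.insert_comm]
    exact valence_congr hg hV (fun k hk => react_insert_of_ne z _ hk)
      (subsingleton_valence_react_of_mem hz (by simp))
      (subsingleton_valence_react_of_mem hz (by simp))

theorem valence_react_react_singleton (hg : ∀ i, SelfIndependent i (g i))
    (hV : ∀ s, (valence g s).Nonempty) (hz : ∀ m, ¬ ReactsWithin g (Bivalent g) i m z)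
    (S : Finset (Fin n)) :
    valence g (react g (react g z S) {i}) = valence g (react g z {i}) := by
  -- once `i` reacts, it no longer matters whether `i` already reacted together with `S`
  have hi : i ∈ insert i S := Finset.mem_insert_self i S
  rw [react_singleton_congr (hg i) fun k hk => (react_insert_of_ne z S hk).symm,
    valence_eq_of_reaches (Reaches.react _ _) (subsingleton_valence_react_of_mem hz hi) (hV _),
    valence_react_of_mem hg hV hz hi]

theorem mem_valence_react_singleton (hg : ∀ i, SelfIndependent i (g i))
    (hV : ∀ s, (valence g s).Nonempty) {t : ∀ j, A j} (h : Reaches g z t)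
    (ht : Stable g t) (hzb : Bivalent g z) (hz : ∀ m, ¬ ReactsWithin g (Bivalent g) i m z) :
    t ∈ valence g (react g z {i}) := by
  induction h using Relation.ReflTransGen.head_induction_on with
  | refl => exact absurd hzb (by simp [Bivalent, valence_of_stable ht])
  | @head y _ hstep hreach ih =>
    obtain ⟨S, rfl⟩ := hstep
    rw [← valence_react_react_singleton hg hV hz S]
    by_cases hb : Bivalent g (react g y S)
    · exact ih hb (not_reactsWithin_react hz hb)
    · rw [valence_eq_of_reaches (Reaches.react _ _) (Set.not_nontrivial_iff.mp hb) (hV _)]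
      exact ⟨hreach, ht⟩

theorem exists_reactsWithin (hg : ∀ i, SelfIndependent i (g i))
    (hV : ∀ s, (valence g s).Nonempty) (hzb : Bivalent g z) (i : Fin n) :
    ∃ m, ReactsWithin g (Bivalent g) i m z := by
  by_contra! hz
  obtain ⟨t₁, ⟨h₁, ht₁⟩, t₂, ⟨h₂, ht₂⟩, hne⟩ := id hzb
  exact hne (subsingleton_valence_react_of_mem hz (Finset.mem_singleton_self i)
    (mem_valence_react_singleton hg hV h₁ ht₁ hzb hz)
    (mem_valence_react_singleton hg hV h₂ ht₂ hzb hz))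

end Crux

section Schedule

variable {good : (∀ j, A j) → Prop} {i : Fin n}

theorem ReactsWithin.succ {m : ℕ} {y : ∀ j, A j} (h : ReactsWithin g good i m y) :
    ReactsWithin g good i (m + 1) y := by
  induction m generalizing y with
  | zero => exact h.elim
  | succ m ih =>
    obtain ⟨S, hS, hgood, hor⟩ := h
    exact ⟨S, hS, hgood, hor.imp_right ih⟩

theorem ReactsWithin.mono {m k : ℕ} {y : ∀ j, A j} (h : ReactsWithin g good i m y)
    (hmk : m ≤ k) : ReactsWithin g good i k y := by
  induction hmk with
  | refl => exact h
  | step _ ih => exact ih.succ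

variable (g good i) in
theorem exists_react_step (y : ∀ j, A j) :
    ∃ S : Finset (Fin n), ∀ m, ReactsWithin g good i (m + 1) y →
      S.Nonempty ∧ good (react g y S) ∧
        (i ∈ S ∨ ReactsWithin g good i m (react g y S)) := by
  classical
  -- the first step of a shortest route serves every budget
  by_cases h : ∃ m, ReactsWithin g good i m y
  · have hmin := Nat.find_spec h
    obtain ⟨m₀, hm₀⟩ : ∃ m₀, Nat.find h = m₀ + 1 :=
      Nat.exists_eq_succ_of_ne_zero fun h0 => by rw [h0] at hmin; exact hmin
    rw [hm₀] at hmin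
    obtain ⟨S, hS, hgood, hor⟩ := hmin
    refine ⟨S, fun m hm => ⟨hS, hgood, hor.imp_right fun h' => h'.mono ?_⟩⟩
    have := Nat.find_min' h hm
    omega
  · exact ⟨∅, fun m hm => absurd ⟨_, hm⟩ h⟩

variable [NeZero n]

variable (g) in
/-- Serves the targets `0, 1, 2, …` (mod `n`) in turn, each by `next`-steps until it has reacted;
the second component is the index of the current target. -/
def targetedRun (next : (∀ j, A j) → Fin n → Finset (Fin n)) (y₀ : ∀ j, A j) :
    ℕ → (∀ j, A j) × ℕ
  | 0 => (y₀, 0)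
  | t + 1 =>
    let p := targetedRun next y₀ t
    let S := next p.1 (Fin.ofNat n p.2)
    (react g p.1 S, if Fin.ofNat n p.2 ∈ S then p.2 + 1 else p.2)

variable (g) in
def targetedSchedule (next : (∀ j, A j) → Fin n → Finset (Fin n)) (y₀ : ∀ j, A j) :
    ℕ → Finset (Fin n)
  | 0 => Finset.univ
  | t + 1 => next (targetedRun g next y₀ t).1 (Fin.ofNat n (targetedRun g next y₀ t).2)

theorem dynamics_targetedSchedule (next : (∀ j, A j) → Fin n → Finset (Fin n))
    (y₀ : ∀ j, A j) (t : ℕ) :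
    dynamics g y₀ (targetedSchedule g next y₀) t = (targetedRun g next y₀ t).1 := by
  induction t with
  | zero => rfl
  | succ t ih => rw [dynamics_succ, ih]; rfl

section TargetedRun

variable {next : (∀ j, A j) → Fin n → Finset (Fin n)} {y₀ : ∀ j, A j}

local notation "run" => targetedRun g next y₀
local notation "σ" => targetedSchedule g next y₀

theorem targetedSchedule_step
    (hnext : ∀ y i m, ReactsWithin g good i (m + 1) y →
      (next y i).Nonempty ∧ good (react g y (next y i)) ∧
        (i ∈ next y i ∨ ReactsWithin g good i m (react g y (next y i))))
    (hreacts : ∀ y, good y → ∀ i, ∃ m, ReactsWithin g good i m y) {t : ℕ}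
    (hy : good (run t).1) :
    (σ (t + 1)).Nonempty ∧ good (run (t + 1)).1 := by
  obtain ⟨_ | m, hm⟩ := hreacts _ hy (Fin.ofNat n (run t).2)
  · exact hm.elim
  · exact (hnext _ _ _ hm).imp_right And.left

theorem exists_targetedSchedule_serves
    (hnext : ∀ y i m, ReactsWithin g good i (m + 1) y →
      (next y i).Nonempty ∧ good (react g y (next y i)) ∧
        (i ∈ next y i ∨ ReactsWithin g good i m (react g y (next y i))))
    (hreacts : ∀ y, good y → ∀ i, ∃ m, ReactsWithin g good i m y)
    (hgood : ∀ t, good (run t).1)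
    (t : ℕ) : ∃ t' ≥ t, (run t').2 = (run t).2 ∧ Fin.ofNat n (run t).2 ∈ σ (t' + 1) := by
  obtain ⟨m, hm⟩ := hreacts _ (hgood t) (Fin.ofNat n (run t).2)
  induction m generalizing t with
  | zero => exact hm.elim
  | succ m ih =>
    obtain ⟨-, -, hor⟩ := hnext _ _ _ hm
    by_cases hi : Fin.ofNat n (run t).2 ∈ σ (t + 1)
    · exact ⟨t, le_rfl, rfl, hi⟩
    · have hc : (run (t + 1)).2 = (run t).2 := if_neg hi
      obtain ⟨t', ht', hc', hi'⟩ := ih (t + 1) (hc ▸ hor.resolve_left hi)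
      exact ⟨t', by omega, hc'.trans hc, hc ▸ hi'⟩

theorem fair_targetedSchedule
    (hserves : ∀ t, ∃ t' ≥ t,
      (run t').2 = (run t).2 ∧ Fin.ofNat n (run t).2 ∈ σ (t' + 1)) :
    Fair σ := by
  have hreach : ∀ t k, (run t).2 ≤ k → ∃ t' ≥ t, (run t').2 = k := by
    intro t k hk
    induction k, hk using Nat.le_induction with
    | base => exact ⟨t, le_rfl, rfl⟩
    | succ k _ ih =>
      obtain ⟨t', ht', rfl⟩ := ih
      obtain ⟨t'', ht'', hc'', hi⟩ := hserves t'
      rw [← hc''] at hi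
      exact ⟨t'' + 1, by omega, by rw [← hc'']; exact if_pos hi⟩
  intro i N
  obtain ⟨t, htN, hc⟩ := hreach N (n * (run N).2 + i)
    (le_add_right (Nat.le_mul_of_pos_left _ (Nat.pos_of_neZero n)))
  obtain ⟨t', ht', -, hi⟩ := hserves t
  have hk : Fin.ofNat n (run t).2 = i := by
    ext
    rw [Fin.val_ofNat, hc, Nat.mul_add_mod, Nat.mod_eq_of_lt i.isLt]
  exact ⟨t' + 1, by omega, hk ▸ hi⟩

end TargetedRun

theorem exists_fair_schedule_forall_good
    (hreacts : ∀ y, good y → ∀ i, ∃ m, ReactsWithin g good i m y) {y₀ : ∀ j, A j}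
    (hy₀ : good y₀) :
    ∃ σ : ℕ → Finset (Fin n),
      (∀ t, (σ t).Nonempty) ∧ Fair σ ∧ ∀ t, good (dynamics g y₀ σ t) := by
  choose next hnext using fun y i => exists_react_step g good i y
  have hgood : ∀ t, good (targetedRun g next y₀ t).1 := by
    intro t
    induction t with
    | zero => exact hy₀
    | succ t ih => exact (targetedSchedule_step hnext hreacts ih).2
  refine ⟨targetedSchedule g next y₀, ?_,
    fair_targetedSchedule (exists_targetedSchedule_serves hnext hreacts hgood), fun t => ?_⟩
  · rintro (_ | t)
    · exact Finset.univ_nonempty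
    · exact (targetedSchedule_step hnext hreacts (hgood t)).1
  · rw [dynamics_targetedSchedule]
    exact hgood t

end Schedule

theorem not_convergent_of_stable_ne (hg : ∀ i, SelfIndependent i (g i)) {a b : ∀ j, A j}
    (ha : Stable g a) (hb : Stable g b) (hab : a ≠ b) : ¬ Convergent g := by
  intro hconv
  obtain ⟨j, -⟩ := Function.ne_iff.mp hab
  have : NeZero n := NeZero.of_pos j.pos
  have hV := valence_nonempty_of_convergent hconv
  obtain ⟨y₀, hy₀⟩ := exists_bivalent hg hV ha hb hab
  obtain ⟨σ, hne, hfair, hbiv⟩ :=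
    exists_fair_schedule_forall_good (fun y hy i => exists_reactsWithin hg hV hy i) hy₀
  obtain ⟨t₀, ht₀⟩ := hconv y₀ σ hne hfair
  have hstable := stable_dynamics_of_fair hfair ht₀
  simpa [Bivalent, valence_of_stable hstable] using hbiv t₀

theorem majorityReaction_selfIndependent {n : ℕ} {Nb : Fin n → Finset (Fin n)}
    (hloop : ∀ i, i ∉ Nb i) (i : Fin n) : SelfIndependent i (majorityReaction Nb i) := by
  intro a b hab
  have hfilter : (Nb i).filter (a · = true) = (Nb i).filter (b · = true) :=
    Finset.filter_congr fun j hj => by rw [hab j (ne_of_mem_of_not_mem hj (hloop i))]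
  simp only [majorityReaction, hfilter]

theorem majorityReaction_stable_false {n : ℕ} {Nb : Fin n → Finset (Fin n)}
    (hfriend : ∀ i, (Nb i).Nonempty) : Stable (majorityReaction Nb) fun _ => false := by
  intro i
  simpa [majorityReaction, Finset.nonempty_iff_ne_empty] using hfriend i

theorem majorityReaction_stable_true {n : ℕ} (Nb : Fin n → Finset (Fin n)) :
    Stable (majorityReaction Nb) fun _ => true := by
  intro i
  simp only [majorityReaction, Finset.filter_true, decide_eq_true_eq]
  omega

/-- For every social network (a directed graph on `n ≥ 1`
vertices without self-loops in which every vertex has at least one friend),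
the diffusion-of-technologies system is not convergent: there are an initial
assignment of technologies and a fair schedule under which the dynamics is
not eventually constant. -/
theorem social_network_diffusion_not_convergent
    {n : ℕ} (hn : 0 < n) (Nb : Fin n → Finset (Fin n))
    (hloop : ∀ i, i ∉ Nb i) (hfriend : ∀ i, (Nb i).Nonempty) :
    ∃ (s0 : Fin n → Bool) (σ : ℕ → Finset (Fin n)),
      (∀ t, (σ t).Nonempty) ∧ Fair σ ∧
      ¬ EventuallyConstant (dynamics (majorityReaction Nb) s0 σ) := by
  have hne : (fun _ : Fin n => false) ≠ fun _ => true := fun h => by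
    simpa using congrFun h ⟨0, hn⟩
  have := not_convergent_of_stable_ne (majorityReaction_selfIndependent hloop)
    (majorityReaction_stable_false hfriend) (majorityReaction_stable_true Nb) hne
  simpa [Convergent] using this
end

section
/- (Fair-Extension Lemma) In a polychromatic decision protocol with a C-chromatic coloring that satisfies Independence of Decisions (IoD), every polychromatic run x can be extended by a fair extension to another polychromatic run; here a fair extension of x is a finite sequence of events e_1,…,e_k such that each e_j is enabled at x·e_1⋯e_{j−1} and every event that is enabled at x and at every intermediate run x·e_1⋯e_j (for 0 ≤ j ≤ k) occurs among e_1,…,e_k. -/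
open Classical in
/-- The subsequence of a run consisting of those events whose principal set
meets `Q`. -/
noncomputable def restrictRun {E P : Type*} (prin : E → Set P) (Q : Set P)
    (x : List E) : List E :=
  x.filter fun e => decide ((prin e ∩ Q).Nonempty)

/-- `y` includes `x`: for every principal `p`, the subsequence of `x` of
events seen by `p` is a prefix of the corresponding subsequence of `y`. -/
def RunIncludes {E P : Type*} (prin : E → Set P) (x y : List E) : Prop :=
  ∀ p : P, restrictRun prin {p} x <+: restrictRun prin {p} y

/-- `x` and `y` are equivalent with respect to the set `Q` of principals:
their subsequences of events whose principal sets meet `Q` coincide. -/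
def RunEquiv {E P : Type*} (prin : E → Set P) (Q : Set P)
    (x y : List E) : Prop :=
  restrictRun prin Q x = restrictRun prin Q y

/-- An asynchronous protocol: a prefix-closed set of runs satisfying property
`P2`.  (Property `P3` — finitely many events are enabled at each run — holds
automatically since the set `E` of events is finite.) -/
structure Protocol (E P : Type*) where
  prin : E → Set P
  prin_nonempty : ∀ e, (prin e).Nonempty
  runs : Set (List E)
  prefix_closed : ∀ x y : List E, x <+: y → y ∈ runs → x ∈ runs
  p2 : ∀ (x y : List E) (e : E), x ++ [e] ∈ runs → y ∈ runs →
    RunIncludes prin x y → RunEquiv prin (prin e) x y → y ++ [e] ∈ runs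

/-- An event `e` is enabled at a run `x` if `x·e` is also a run. -/
def Protocol.Enabled {E P : Type*} (Pr : Protocol E P)
    (x : List E) (e : E) : Prop :=
  x ++ [e] ∈ Pr.runs

/-- A run is monochromatic if its color is a singleton. -/
def Monochromatic {E C : Type*} (col : List E → Set C) (x : List E) : Prop :=
  ∃ c : C, col x = {c}

/-- A run is polychromatic if its color has at least two elements. -/
def Polychromatic {E C : Type*} (col : List E → Set C) (x : List E) : Prop :=
  ∃ c d : C, c ∈ col x ∧ d ∈ col x ∧ c ≠ d

/-- `col` is a `C`-chromatic coloring of the protocol: it satisfies conditions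
`C1`, `C2` and `C3`. -/
def IsColoring {E P C : Type*} (Pr : Protocol E P)
    (col : List E → Set C) : Prop :=
  (∀ c : C, ∃ x ∈ Pr.runs, col x = {c}) ∧
  (∀ x ∈ Pr.runs, ∀ c ∈ col x, ∃ y ∈ Pr.runs, x <+: y ∧ col y = {c}) ∧
  (∀ x ∈ Pr.runs, ∀ y ∈ Pr.runs, RunIncludes Pr.prin x y → col y ⊆ col x)

/-- Independence of Decisions (IoD). -/
def IoD {E P C : Type*} (Pr : Protocol E P) (col : List E → Set C) : Prop :=
  ∀ x ∈ Pr.runs, Polychromatic col x →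
    ∀ e : E, Pr.Enabled x e → ∀ c : C, col (x ++ [e]) = {c} →
      ∀ e' : E, e' ≠ e → Pr.Enabled x e' →
        c ∈ col (x ++ [e']) ∧
        ((x ++ [e']) ++ [e] ∈ Pr.runs →
          ∀ d : C, col ((x ++ [e']) ++ [e]) = {d} → d = c)

/-- The prefix of length `k` of an infinite sequence of events. -/
def prefixList {E : Type*} (π : ℕ → E) (k : ℕ) : List E :=
  List.ofFn fun j : Fin k => π (j : ℕ)

/-- An infinite fair sequence: all finite prefixes are runs and every event
enabled at all but finitely many prefixes occurs infinitely often. -/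
def InfFairSeq {E P : Type*} (Pr : Protocol E P) (π : ℕ → E) : Prop :=
  (∀ k : ℕ, prefixList π k ∈ Pr.runs) ∧
  ∀ e : E, (∃ N : ℕ, ∀ k : ℕ, N ≤ k → Pr.Enabled (prefixList π k) e) →
    ∀ N : ℕ, ∃ k : ℕ, N ≤ k ∧ π k = e

/-- A finite fair sequence: a run at which no event is enabled. -/
def FinFairSeq {E P : Type*} (Pr : Protocol E P) (x : List E) : Prop :=
  x ∈ Pr.runs ∧ ∀ e : E, ¬ Pr.Enabled x e

/-- The decision property `D`: every fair sequence (finite or infinite) has a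
monochromatic finite prefix. -/
def DecisionProtocol {E P C : Type*} (Pr : Protocol E P)
    (col : List E → Set C) : Prop :=
  (∀ x : List E, FinFairSeq Pr x → ∃ p : List E, p <+: x ∧ Monochromatic col p) ∧
  (∀ π : ℕ → E, InfFairSeq Pr π → ∃ k : ℕ, Monochromatic col (prefixList π k))

/-- A fair extension of a run `x`: a finite sequence of events each enabled at
the preceding intermediate run, such that every event enabled at `x` and at
every intermediate run occurs in the extension. -/
def FairExtension {E P : Type*} (Pr : Protocol E P) (x es : List E) : Prop :=
  x ++ es ∈ Pr.runs ∧
  ∀ e : E, (∀ p : List E, p <+: es → Pr.Enabled (x ++ p) e) → e ∈ es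

/-! Starting from a polychromatic run, handle the finitely many events one at a time, keeping the
run polychromatic and making each event either occur or become disabled. For one event `e` with
`x·e` monochromatic of color `c`, walk along an extension of `x` that decides another color `d`.
As long as taking `e` still decides `c`, IoD (i) keeps every intermediate run polychromatic; at
the first step where this fails, `e` is either disabled, or taking it gives a run that IoD (ii)
forbids to be monochromatic. Such one-step extensions of polychromatic runs never have empty
color, because the decision property applied to a round-robin fair sequence yields a
monochromatic run comparable with any given run. -/

section FairExtension

variable {E P C : Type*}

lemma List.IsPrefix.runIncludes {prin : E → Set P} {x y : List E} (h : x <+: y) :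
    RunIncludes prin x y :=
  fun _ => h.filter _

section Coloring

variable {Pr : Protocol E P} {col : List E → Set C}

lemma IsColoring.anti (hcol : IsColoring Pr col) {x y : List E} (hx : x ∈ Pr.runs)
    (hy : y ∈ Pr.runs) (hxy : x <+: y) : col y ⊆ col x :=
  hcol.2.2 x hx y hy hxy.runIncludes

lemma polychromatic_iff_nontrivial {x : List E} : Polychromatic col x ↔ (col x).Nontrivial := by
  simp only [Polychromatic, Set.Nontrivial]
  aesop

lemma Monochromatic.not_polychromatic {x : List E} (h : Monochromatic col x) :
    ¬ Polychromatic col x := by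
  obtain ⟨c, hc⟩ := h
  rw [polychromatic_iff_nontrivial, hc]
  exact Set.not_nontrivial_singleton

lemma monochromatic_or_polychromatic {x : List E} (h : (col x).Nonempty) :
    Monochromatic col x ∨ Polychromatic col x := by
  rw [polychromatic_iff_nontrivial]
  exact h.exists_eq_singleton_or_nontrivial

lemma Polychromatic.of_prefix (hcol : IsColoring Pr col) {x y : List E} (hx : x ∈ Pr.runs)
    (hy : y ∈ Pr.runs) (hxy : x <+: y) (h : Polychromatic col y) : Polychromatic col x := by
  rw [polychromatic_iff_nontrivial] at h ⊢
  exact h.mono (hcol.anti hx hy hxy)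

end Coloring

section FairSequences

variable (Pr : Protocol E P)

lemma prefixList_succ (π : ℕ → E) (k : ℕ) :
    prefixList π (k + 1) = prefixList π k ++ [π k] := by
  simp only [prefixList, List.ofFn_succ', List.concat_eq_append]
  rfl

lemma prefixList_prefix (π : ℕ → E) {j k : ℕ} (hjk : j ≤ k) :
    prefixList π j <+: prefixList π k := by
  induction k, hjk using Nat.le_induction with
  | base => exact List.prefix_refl _
  | succ k _ ih => exact ih.trans (prefixList_succ π k ▸ List.prefix_append _ _)

open Classical in
noncomputable def greedyRun (s : ℕ → E) (y : List E) : ℕ → List E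
  | 0 => y
  | k + 1 =>
    let r := greedyRun s y k
    if Pr.Enabled r (s k) then r ++ [s k]
    else if h : ∃ e, Pr.Enabled r e then r ++ [h.choose] else r

variable {Pr} {s : ℕ → E} {y : List E}

lemma greedyRun_mem (hy : y ∈ Pr.runs) (k : ℕ) : greedyRun Pr s y k ∈ Pr.runs := by
  induction k with
  | zero => exact hy
  | succ k ih =>
    simp only [greedyRun]
    split_ifs with hs h
    · exact hs
    · exact h.choose_spec
    · exact ih

lemma prefix_greedyRun (k : ℕ) : y <+: greedyRun Pr s y k := by
  induction k with
  | zero => exact List.prefix_refl y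
  | succ k ih =>
    simp only [greedyRun]
    split_ifs
    · exact ih.trans (List.prefix_append _ _)
    · exact ih.trans (List.prefix_append _ _)
    · exact ih

lemma greedyRun_succ {k : ℕ} (h : ∃ e, Pr.Enabled (greedyRun Pr s y k) e) :
    ∃ e, greedyRun Pr s y (k + 1) = greedyRun Pr s y k ++ [e] ∧
      (Pr.Enabled (greedyRun Pr s y k) (s k) → e = s k) := by
  simp only [greedyRun]
  split_ifs with hs
  · exact ⟨s k, rfl, fun _ => rfl⟩
  · exact ⟨h.choose, rfl, fun h' => absurd h' hs⟩

lemma exists_fair_of_schedule (hs : ∀ e N, ∃ k ≥ N, s k = e) (hy : y ∈ Pr.runs) :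
    (∃ z, y <+: z ∧ FinFairSeq Pr z) ∨
      ∃ π : ℕ → E, InfFairSeq Pr π ∧ prefixList π y.length = y := by
  by_cases hstop : ∃ k, ∀ e, ¬ Pr.Enabled (greedyRun Pr s y k) e
  · obtain ⟨k, hk⟩ := hstop
    exact Or.inl ⟨_, prefix_greedyRun k, greedyRun_mem hy k, hk⟩
  push Not at hstop
  choose a ha hsa using fun k => greedyRun_succ (s := s) (y := y) (hstop k)
  set π : ℕ → E := fun n => if h : n < y.length then y[n] else a (n - y.length)
  have hπy : prefixList π y.length = y :=
    List.ext_getElem (by simp [prefixList]) fun n h _ => by simp [prefixList, π]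
  have hrun : ∀ j, prefixList π (y.length + j) = greedyRun Pr s y j := by
    intro j
    induction j with
    | zero => exact hπy
    | succ j ih => rw [← Nat.add_assoc, prefixList_succ, ih, ha]; simp [π]
  refine Or.inr ⟨π, ⟨fun k => ?_, ?_⟩, hπy⟩
  · rcases le_total k y.length with hk | hk
    · exact Pr.prefix_closed _ _ (hπy ▸ prefixList_prefix π hk) hy
    · obtain ⟨j, rfl⟩ := Nat.exists_eq_add_of_le hk
      exact hrun j ▸ greedyRun_mem hy j
  · intro e ⟨N, hN⟩ M
    obtain ⟨k, hk, rfl⟩ := hs e (N + M)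
    refine ⟨y.length + k, by omega, ?_⟩
    have hen : Pr.Enabled (greedyRun Pr s y k) (s k) := hrun k ▸ hN _ (by omega)
    simpa [π] using hsa k hen

end FairSequences

lemma exists_schedule [Countable E] [Nonempty E] :
    ∃ s : ℕ → E, ∀ e N, ∃ k ≥ N, s k = e := by
  obtain ⟨f, hf⟩ := exists_surjective_nat E
  refine ⟨fun k => f k.unpair.1, fun e N => ?_⟩
  obtain ⟨m, rfl⟩ := hf e
  exact ⟨Nat.pair m N, Nat.right_le_pair m N, by simp⟩

section Decisions

variable {Pr : Protocol E P} {col : List E → Set C}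

lemma exists_monochromatic_comparable [Countable E] (hD : DecisionProtocol Pr col) {y : List E}
    (hy : y ∈ Pr.runs) :
    ∃ p ∈ Pr.runs, Monochromatic col p ∧ (p <+: y ∨ y <+: p) := by
  rcases isEmpty_or_nonempty E with hE | hE
  · obtain ⟨p, hp, hmono⟩ := hD.1 y ⟨hy, fun e => hE.elim e⟩
    exact ⟨p, Pr.prefix_closed _ _ hp hy, hmono, Or.inl hp⟩
  obtain ⟨s, hs⟩ := exists_schedule (E := E)
  rcases exists_fair_of_schedule hs hy with ⟨z, hyz, hz⟩ | ⟨π, hπ, hπy⟩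
  · obtain ⟨p, hpz, hmono⟩ := hD.1 z hz
    exact ⟨p, Pr.prefix_closed _ _ hpz hz.1, hmono, List.prefix_or_prefix_of_prefix hpz hyz⟩
  · obtain ⟨k, hmono⟩ := hD.2 π hπ
    refine ⟨prefixList π k, hπ.1 k, hmono, ?_⟩
    rw [← hπy]
    exact (le_total k y.length).imp (prefixList_prefix π) (prefixList_prefix π)

lemma exists_enabled_of_polychromatic (hcol : IsColoring Pr col) (hD : DecisionProtocol Pr col)
    {x : List E} (hx : x ∈ Pr.runs) (hpoly : Polychromatic col x) : ∃ e, Pr.Enabled x e := by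
  by_contra! hstop
  obtain ⟨p, hpx, hmono⟩ := hD.1 x ⟨hx, hstop⟩
  exact hmono.not_polychromatic (hpoly.of_prefix hcol (Pr.prefix_closed _ _ hpx hx) hx hpx)

lemma monochromatic_or_polychromatic_append [Countable E] (hcol : IsColoring Pr col)
    (hD : DecisionProtocol Pr col) {x : List E} (hx : x ∈ Pr.runs) (hpoly : Polychromatic col x)
    {e : E} (he : Pr.Enabled x e) :
    Monochromatic col (x ++ [e]) ∨ Polychromatic col (x ++ [e]) := by
  obtain ⟨p, hp, ⟨c, hc⟩, hcomp⟩ := exists_monochromatic_comparable hD he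
  refine monochromatic_or_polychromatic ?_
  rcases hcomp with hpxe | hxep
  · rcases List.prefix_concat_iff.mp hpxe with rfl | hpx
    · exact ⟨c, hc ▸ rfl⟩
    · exact absurd (hpoly.of_prefix hcol hp hx hpx) (Monochromatic.not_polychromatic ⟨c, hc⟩)
  · exact ⟨c, hcol.anti he hp hxep (hc ▸ rfl)⟩

end Decisions

def Resolves (Pr : Protocol E P) (x t : List E) (e : E) : Prop :=
  e ∈ t ∨ ∃ p, p <+: t ∧ ¬ Pr.Enabled (x ++ p) e

section Resolves

variable {Pr : Protocol E P} {x s t : List E} {e : E}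

lemma resolves_nil_iff : Resolves Pr x [] e ↔ ¬ Pr.Enabled x e := by
  simp [Resolves]

lemma Resolves.append_right (h : Resolves Pr x s e) : Resolves Pr x (s ++ t) e := by
  rcases h with h | ⟨p, hp, hne⟩
  · exact Or.inl (List.mem_append_left t h)
  · exact Or.inr ⟨p, hp.trans (List.prefix_append s t), hne⟩

lemma Resolves.append_left (h : Resolves Pr (x ++ s) t e) : Resolves Pr x (s ++ t) e := by
  rcases h with h | ⟨p, hp, hne⟩
  · exact Or.inl (List.mem_append_right s h)
  · refine Or.inr ⟨s ++ p, (List.prefix_append_right_inj s).mpr hp, ?_⟩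
    rwa [← List.append_assoc]

lemma Resolves.mem_of_forall_enabled (h : Resolves Pr x t e)
    (hen : ∀ p, p <+: t → Pr.Enabled (x ++ p) e) : e ∈ t :=
  h.resolve_right fun ⟨p, hp, hne⟩ => hne (hen p hp)

end Resolves

section Extension

variable [Countable E] {Pr : Protocol E P} {col : List E → Set C}

lemma exists_polychromatic_resolving_of_walk (hcol : IsColoring Pr col) (hIoD : IoD Pr col)
    (hD : DecisionProtocol Pr col) {e : E} {c d : C} (hcd : c ≠ d) (w : List E) :
    ∀ v : List E, v ++ w ∈ Pr.runs → col (v ++ w) = {d} → Pr.Enabled v e →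
      col (v ++ [e]) = {c} →
      ∃ t, v ++ t ∈ Pr.runs ∧ Polychromatic col (v ++ t) ∧ Resolves Pr v t e := by
  induction w with
  | nil =>
    intro v hv hd he hc
    rw [List.append_nil] at hv hd
    have hcv : c ∈ col v := hcol.anti hv he (List.prefix_append v [e]) (hc ▸ rfl)
    exact absurd (by simpa [hd] using hcv) hcd
  | cons f w ih =>
    intro v hvw hd he hc
    have hvf : Pr.Enabled v f := Pr.prefix_closed _ _ (by simp) hvw
    have hv : v ∈ Pr.runs := Pr.prefix_closed _ _ (List.prefix_append v _) hvw
    have hdf : d ∈ col (v ++ [f]) := hcol.anti hvf hvw (by simp) (hd ▸ rfl)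
    have hpv : Polychromatic col v :=
      ⟨c, d, hcol.anti hv he (List.prefix_append v [e]) (hc ▸ rfl),
        hcol.anti hv hvf (List.prefix_append v [f]) hdf, hcd⟩
    have hfe : f ≠ e := by
      rintro rfl
      exact hcd (hc ▸ hdf).symm
    obtain ⟨hcf, hIoD_ii⟩ := hIoD v hv hpv e he c hc f hfe hvf
    have hpvf : Polychromatic col (v ++ [f]) := ⟨c, d, hcf, hdf, hcd⟩
    by_cases he_vf : Pr.Enabled (v ++ [f]) e
    swap
    · exact ⟨[f], hvf, hpvf, Or.inr ⟨[f], List.prefix_refl _, he_vf⟩⟩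
    by_cases hc_vfe : col (v ++ [f] ++ [e]) = {c}
    · obtain ⟨t, ht, hpt, hres⟩ :=
        ih (v ++ [f]) (by simpa using hvw) (by simpa using hd) he_vf hc_vfe
      refine ⟨[f] ++ t, by simpa using ht, by simpa using hpt, hres.append_left⟩
    · -- by IoD (ii), `v·f·e` cannot be monochromatic
      refine ⟨[f, e], by simpa [Protocol.Enabled] using he_vf, ?_, Or.inl (by simp)⟩
      rcases monochromatic_or_polychromatic_append hcol hD hvf hpvf he_vf with
        ⟨c', hc_mono⟩ | hpoly
      · exact absurd (hIoD_ii he_vf c' hc_mono ▸ hc_mono) hc_vfe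
      · simpa using hpoly

lemma exists_polychromatic_resolving (hcol : IsColoring Pr col) (hIoD : IoD Pr col)
    (hD : DecisionProtocol Pr col) {v : List E} (hv : v ∈ Pr.runs) (hpv : Polychromatic col v)
    (e : E) : ∃ t, v ++ t ∈ Pr.runs ∧ Polychromatic col (v ++ t) ∧ Resolves Pr v t e := by
  by_cases he : Pr.Enabled v e
  swap
  · exact ⟨[], by simpa using hv, by simpa using hpv, resolves_nil_iff.mpr he⟩
  rcases monochromatic_or_polychromatic_append hcol hD hv hpv he with ⟨c, hc⟩ | hpoly
  · obtain ⟨d, hd, hdc⟩ := (polychromatic_iff_nontrivial.mp hpv).exists_ne c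
    obtain ⟨z, hz, ⟨w, rfl⟩, hzd⟩ := hcol.2.1 v hv d hd
    exact exists_polychromatic_resolving_of_walk hcol hIoD hD (Ne.symm hdc) w v hz hzd he hc
  · exact ⟨[e], he, hpoly, Or.inl (List.mem_singleton_self e)⟩

lemma exists_polychromatic_resolving_forall_mem (hcol : IsColoring Pr col) (hIoD : IoD Pr col)
    (hD : DecisionProtocol Pr col) (l : List E) :
    ∀ v ∈ Pr.runs, Polychromatic col v →
      ∃ t, v ++ t ∈ Pr.runs ∧ Polychromatic col (v ++ t) ∧
        ∀ e ∈ l, Resolves Pr v t e := by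
  induction l with
  | nil => exact fun v hv hpv => ⟨[], by simpa using hv, by simpa using hpv, by simp⟩
  | cons e l ih =>
    intro v hv hpv
    obtain ⟨s, hs, hps, hres⟩ := exists_polychromatic_resolving hcol hIoD hD hv hpv e
    obtain ⟨t, ht, hpt, hrest⟩ := ih (v ++ s) hs hps
    refine ⟨s ++ t, by simpa using ht, by simpa using hpt, ?_⟩
    rintro e' (_ | ⟨_, he'⟩)
    · exact hres.append_right
    · exact (hrest e' he').append_left

end Extension

end FairExtension

theorem fair_extension_lemma_general
    {E P C : Type*} [Fintype E] (Pr : Protocol E P)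
    (col : List E → Set C) (hcol : IsColoring Pr col) (hIoD : IoD Pr col)
    (hD : DecisionProtocol Pr col)
    (x : List E) (hx : x ∈ Pr.runs) (hpoly : Polychromatic col x) :
    ∃ es : List E, es ≠ [] ∧ FairExtension Pr x es ∧
      Polychromatic col (x ++ es) := by
  obtain ⟨t, ht, hpt, hres⟩ :=
    exists_polychromatic_resolving_forall_mem hcol hIoD hD Finset.univ.toList x hx hpoly
  have hres' : ∀ e, Resolves Pr x t e := fun e => hres e (by simp)
  refine ⟨t, ?_, ⟨ht, fun e hen => (hres' e).mem_of_forall_enabled hen⟩, hpt⟩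
  rintro rfl
  obtain ⟨e, he⟩ := exists_enabled_of_polychromatic hcol hD hx hpoly
  exact resolves_nil_iff.mp (hres' e) he

/-- **Fair-Extension Lemma.** In a polychromatic decision
protocol with a `C`-chromatic coloring satisfying IoD, every polychromatic run
can be extended by a fair extension to another polychromatic run. -/
theorem fair_extension_lemma
    {E P C : Type*} [Fintype E] (Pr : Protocol E P)
    (col : List E → Set C) (hcol : IsColoring Pr col) (hIoD : IoD Pr col)
    (hD : DecisionProtocol Pr col)
    (hpolyrun : ∃ y ∈ Pr.runs, Polychromatic col y)
    (x : List E) (hx : x ∈ Pr.runs) (hpoly : Polychromatic col x) :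
    ∃ es : List E, es ≠ [] ∧ FairExtension Pr x es ∧
      Polychromatic col (x ++ es) :=
  fair_extension_lemma_general Pr col hcol hIoD hD x hx hpoly
end

section
/- Any protocol with a C-chromatic coloring that satisfies Independence of Decisions (IoD) and whose empty run is polychromatic has a fair sequence that never reaches a decision: there exists a fair sequence no finite prefix of which is monochromatic. In particular, such a protocol is not a decision protocol. -/
/-! Starting from the polychromatic empty run, extend the run step by step, giving every event
its turn infinitely often, without ever making a prefix monochromatic. The only danger is an
event `e` with `x·e` monochromatic of color `c`. Then `x` also has some color `d ≠ c`, and by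
`C2` some extension `x·s` of `x` has color `{d}`. Walk along `s`: by IoD every step keeps `c`
in the color, and if `e` still decides after the step it still decides `c`; since `d` stays in
the color too, the walk stays polychromatic, and before reaching `x·s` it meets a run at which
`e` is disabled or no longer decides. There `e` is served without a decision. Either the
construction gets stuck at a run with no enabled event, or its runs converge to an infinite
fair sequence. -/

section Coloring

variable {E P C : Type*} {col : List E → Set C}

theorem Polychromatic.mono {x y : List E} (h : Polychromatic col x) (hxy : col x ⊆ col y) :
    Polychromatic col y := by
  obtain ⟨c, d, hc, hd, hcd⟩ := h
  exact ⟨c, d, hxy hc, hxy hd, hcd⟩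

theorem Polychromatic.not_monochromatic {x : List E} (h : Polychromatic col x) :
    ¬ Monochromatic col x := by
  rintro ⟨a, ha⟩
  obtain ⟨c, d, hc, hd, hcd⟩ := h
  rw [ha, Set.mem_singleton_iff] at hc hd
  exact hcd (hc.trans hd.symm)

theorem exists_ne_of_not_monochromatic {x : List E} {c : C} (hc : c ∈ col x)
    (h : ¬ Monochromatic col x) : ∃ d ∈ col x, d ≠ c := by
  by_contra! hne
  exact h ⟨c, Set.eq_singleton_iff_unique_mem.mpr ⟨hc, hne⟩⟩

variable {Pr : Protocol E P}

theorem IsColoring.col_subset_of_prefix (hcol : IsColoring Pr col) {x y : List E}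
    (hy : y ∈ Pr.runs) (h : x <+: y) : col y ⊆ col x :=
  hcol.2.2 x (Pr.prefix_closed x y h hy) y hy fun _ => h.filter _

theorem IsColoring.mem_col_of_prefix (hcol : IsColoring Pr col) {x y : List E} {c : C}
    (hy : y ∈ Pr.runs) (h : x <+: y) (hc : col y = {c}) : c ∈ col x :=
  hcol.col_subset_of_prefix hy h (hc ▸ Set.mem_singleton c)

theorem IsColoring.nil_mem_runs [Nonempty C] (hcol : IsColoring Pr col) : [] ∈ Pr.runs := by
  obtain ⟨x, hx, -⟩ := hcol.1 (Classical.arbitrary C)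
  exact Pr.prefix_closed [] x x.nil_prefix hx

end Coloring

section Undecided

variable {E P C : Type*} {Pr : Protocol E P} {col : List E → Set C}

def Undecided (col : List E → Set C) (x : List E) : Prop :=
  ∀ p, p <+: x → ¬ Monochromatic col p

theorem Undecided.concat {x : List E} {e : E} (hx : Undecided col x)
    (he : ¬ Monochromatic col (x ++ [e])) : Undecided col (x ++ [e]) := by
  intro p hp
  rcases List.prefix_concat_iff.mp hp with rfl | hp
  exacts [he, hx p hp]

theorem IsColoring.undecided_of_polychromatic (hcol : IsColoring Pr col) {x : List E}
    (hx : x ∈ Pr.runs) (h : Polychromatic col x) : Undecided col x :=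
  fun _ hp => (h.mono (hcol.col_subset_of_prefix hx hp)).not_monochromatic

theorem IoD.exists_polychromatic_extension (hcol : IsColoring Pr col) (hIoD : IoD Pr col)
    {c d : C} (hcd : c ≠ d) {e : E} :
    ∀ s x : List E, x ++ [e] ∈ Pr.runs → col (x ++ [e]) = {c} →
      x ++ s ∈ Pr.runs → col (x ++ s) = {d} →
      ∃ y ∈ Pr.runs, x <+: y ∧ x.length < y.length ∧ Polychromatic col y ∧
        (Pr.Enabled y e → ¬ Monochromatic col (y ++ [e])) := by
  intro s
  induction s with
  | nil =>
    intro x hxe hc _ hd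
    have hcx := hcol.mem_col_of_prefix hxe (List.prefix_append _ _) hc
    rw [List.append_nil] at hd
    rw [hd] at hcx
    exact absurd hcx hcd
  | cons e₁ s ih =>
    intro x hxe hc hxs hd
    rw [← List.singleton_append, ← List.append_assoc] at hxs hd
    have hx₁ : x ++ [e₁] ∈ Pr.runs := Pr.prefix_closed _ _ (List.prefix_append _ _) hxs
    have hd₁ := hcol.mem_col_of_prefix hxs (List.prefix_append _ _) hd
    have hx_poly : Polychromatic col x :=
      ⟨c, d, hcol.mem_col_of_prefix hxe (List.prefix_append _ _) hc,
        hcol.col_subset_of_prefix hx₁ (List.prefix_append _ _) hd₁, hcd⟩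
    have he₁ : e₁ ≠ e := by
      rintro rfl
      exact hcd (hc ▸ hd₁).symm
    obtain ⟨hc₁, hdecides_c⟩ := hIoD x (Pr.prefix_closed _ _ (List.prefix_append _ _) hx₁)
      hx_poly e hxe c hc e₁ he₁ hx₁
    by_cases hstop : Pr.Enabled (x ++ [e₁]) e → ¬ Monochromatic col (x ++ [e₁] ++ [e])
    · exact ⟨x ++ [e₁], hx₁, List.prefix_append _ _, by simp, ⟨c, d, hc₁, hd₁, hcd⟩, hstop⟩
    · push Not at hstop
      obtain ⟨hx₁e, c', hc'⟩ := hstop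
      obtain rfl := hdecides_c hx₁e c' hc'
      obtain ⟨y, hy, hx₁y, hlen, hpoly, hy_stop⟩ := ih (x ++ [e₁]) hx₁e hc' hxs hd
      refine ⟨y, hy, (List.prefix_append _ _).trans hx₁y, ?_, hpoly, hy_stop⟩
      simp only [List.length_append, List.length_singleton] at hlen
      omega

end Undecided

section FairStep

variable {E P C : Type*} {Pr : Protocol E P} {col : List E → Set C}

def FairStep (Pr : Protocol E P) (col : List E → Set C) (x : List E) (e : E) (z : List E) :
    Prop :=
  z ∈ Pr.runs ∧ x <+: z ∧ x.length < z.length ∧ Undecided col z ∧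
    (¬ Pr.Enabled z e ∨ e ∈ z.drop x.length)

theorem fairStep_append_singleton {x y : List E} {e : E} (hxy : x <+: y)
    (hye : y ++ [e] ∈ Pr.runs) (hy : Undecided col y) (hM : ¬ Monochromatic col (y ++ [e])) :
    FairStep Pr col x e (y ++ [e]) := by
  have hlen := hxy.length_le
  refine ⟨hye, hxy.trans (List.prefix_append _ _), ?_, hy.concat hM, Or.inr ?_⟩
  · simp only [List.length_append, List.length_singleton]
    omega
  · simp [List.drop_append_of_le_length hlen]

theorem IoD.exists_fairStep (hcol : IsColoring Pr col) (hIoD : IoD Pr col) {x : List E}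
    {e : E} (hx : x ∈ Pr.runs) (hund : Undecided col x) (he : Pr.Enabled x e) :
    ∃ z, FairStep Pr col x e z := by
  by_cases hM : Monochromatic col (x ++ [e])
  · obtain ⟨c, hc⟩ := hM
    obtain ⟨d, hd, hdc⟩ := exists_ne_of_not_monochromatic
      (hcol.mem_col_of_prefix he (List.prefix_append _ _) hc) (hund x (List.prefix_refl x))
    obtain ⟨_, hxs, ⟨s, rfl⟩, hd⟩ := hcol.2.1 x hx d hd
    obtain ⟨y, hy, hxy, hlen, hpoly, hstop⟩ :=
      hIoD.exists_polychromatic_extension hcol hdc.symm s x he hc hxs hd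
    have hy_und := hcol.undecided_of_polychromatic hy hpoly
    by_cases hye : Pr.Enabled y e
    · exact ⟨_, fairStep_append_singleton hxy hye hy_und (hstop hye)⟩
    · exact ⟨y, hy, hxy, hlen, hy_und, Or.inl hye⟩
  · exact ⟨_, fairStep_append_singleton (List.prefix_refl x) he hund hM⟩

variable (Pr col)

open Classical in
noncomputable def fairStep (x : List E) (e : E) : List E :=
  if h : ∃ z, FairStep Pr col x e z then h.choose else x

theorem prefix_fairStep (x : List E) (e : E) : x <+: fairStep Pr col x e := by
  unfold fairStep
  split_ifs with h
  exacts [h.choose_spec.2.1, List.prefix_refl x]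

variable {Pr col}

theorem fairStep_mem_runs_undecided {x : List E} (e : E) (hx : x ∈ Pr.runs)
    (hund : Undecided col x) :
    fairStep Pr col x e ∈ Pr.runs ∧ Undecided col (fairStep Pr col x e) := by
  unfold fairStep
  split_ifs with h
  exacts [⟨h.choose_spec.1, h.choose_spec.2.2.2.1⟩, ⟨hx, hund⟩]

theorem IoD.fairStep_spec (hcol : IsColoring Pr col) (hIoD : IoD Pr col) {x : List E} {e : E}
    (hx : x ∈ Pr.runs) (hund : Undecided col x) (he : Pr.Enabled x e) :
    FairStep Pr col x e (fairStep Pr col x e) := by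
  have h := hIoD.exists_fairStep hcol hx hund he
  rw [fairStep, dif_pos h]
  exact h.choose_spec

end FairStep

section PrefixChain

variable {α : Type*} {X : ℕ → List α}

theorem prefix_of_le_of_prefix_succ (hX : ∀ t, X t <+: X (t + 1)) {s t : ℕ} (h : s ≤ t) :
    X s <+: X t :=
  Nat.rel_of_forall_rel_succ_of_le (· <+: ·) hX h

noncomputable def chainLimit (X : ℕ → List α) (h : ∀ k, ∃ t, k < (X t).length) (k : ℕ) : α :=
  (X (h k).choose)[k]'(h k).choose_spec

theorem chainLimit_eq_getElem (hX : ∀ t, X t <+: X (t + 1)) (h : ∀ k, ∃ t, k < (X t).length)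
    {t k : ℕ} (hk : k < (X t).length) : chainLimit X h k = (X t)[k] := by
  rcases le_total t (h k).choose with hle | hle
  · exact ((prefix_of_le_of_prefix_succ hX hle).getElem hk).symm
  · exact (prefix_of_le_of_prefix_succ hX hle).getElem _

theorem prefixList_chainLimit (hX : ∀ t, X t <+: X (t + 1)) (h : ∀ k, ∃ t, k < (X t).length)
    {t k : ℕ} (hk : k ≤ (X t).length) : prefixList (chainLimit X h) k = (X t).take k := by
  refine List.ext_getElem (by simp [prefixList, hk]) fun i hi _ => ?_
  have hik : i < k := by simpa [prefixList] using hi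
  simpa [prefixList] using chainLimit_eq_getElem hX h (t := t) (by omega)

end PrefixChain

theorem exists_seq_forall_exists_ge_eq (α : Type*) [Nonempty α] [Countable α] :
    ∃ f : ℕ → α, ∀ a N, ∃ t, N ≤ t ∧ f t = a := by
  obtain ⟨g, hg⟩ := exists_surjective_nat α
  refine ⟨fun t => g t.unpair.1, fun a N => ?_⟩
  obtain ⟨n, rfl⟩ := hg a
  exact ⟨Nat.pair n N, Nat.right_le_pair n N, by simp⟩

section FairChain

variable {E P C : Type*} {Pr : Protocol E P} {col : List E → Set C} {X : ℕ → List E}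
  {sched : ℕ → E}

theorem length_unbounded_of_fairStep (hX : ∀ t, X t <+: X (t + 1))
    (hstep : ∀ t, Pr.Enabled (X t) (sched t) → FairStep Pr col (X t) (sched t) (X (t + 1)))
    (hsched : ∀ e N, ∃ t, N ≤ t ∧ sched t = e) (hlive : ∀ t, ∃ e, Pr.Enabled (X t) e) :
    ∀ k, ∃ t, k < (X t).length := by
  have hgrow : ∀ t, ∃ t', (X t).length < (X t').length := by
    intro t
    obtain ⟨e, he⟩ := hlive t
    obtain ⟨t', htt', rfl⟩ := hsched e t
    by_cases hlen : (X t).length < (X t').length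
    · exact ⟨t', hlen⟩
    have heq : X t = X t' :=
      (prefix_of_le_of_prefix_succ hX htt').eq_of_length_le (not_lt.mp hlen)
    rw [heq] at he ⊢
    exact ⟨t' + 1, (hstep t' he).2.2.1⟩
  intro k
  induction k with
  | zero =>
    obtain ⟨t, ht⟩ := hgrow 0
    exact ⟨t, by omega⟩
  | succ k ih =>
    obtain ⟨t, ht⟩ := ih
    obtain ⟨t', ht'⟩ := hgrow t
    exact ⟨t', by omega⟩

theorem infFairSeq_chainLimit (hX : ∀ t, X t <+: X (t + 1))
    (hinv : ∀ t, X t ∈ Pr.runs ∧ Undecided col (X t))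
    (hstep : ∀ t, Pr.Enabled (X t) (sched t) → FairStep Pr col (X t) (sched t) (X (t + 1)))
    (hsched : ∀ e N, ∃ t, N ≤ t ∧ sched t = e) (hunb : ∀ k, ∃ t, k < (X t).length) :
    InfFairSeq Pr (chainLimit X hunb) ∧
      ∀ k, ¬ Monochromatic col (prefixList (chainLimit X hunb) k) := by
  have hπX : ∀ t, prefixList (chainLimit X hunb) (X t).length = X t := fun t => by
    rw [prefixList_chainLimit hX hunb le_rfl, List.take_length]
  have hπ_prefix : ∀ k, ∃ t, prefixList (chainLimit X hunb) k <+: X t := fun k =>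
    ⟨_, prefixList_chainLimit hX hunb (hunb k).choose_spec.le ▸ List.take_prefix _ _⟩
  have hen_X : ∀ {e N}, (∀ k, N ≤ k → Pr.Enabled (prefixList (chainLimit X hunb) k) e) →
      ∀ t, N ≤ (X t).length → Pr.Enabled (X t) e := fun hN t ht => hπX t ▸ hN _ ht
  refine ⟨⟨fun k => ?_, fun e ⟨N, hN⟩ M => ?_⟩, fun k => ?_⟩
  · obtain ⟨t, ht⟩ := hπ_prefix k
    exact Pr.prefix_closed _ _ ht (hinv t).1
  · obtain ⟨t₀, ht₀⟩ := hunb (max N M)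
    obtain ⟨t, htt₀, rfl⟩ := hsched e t₀
    have hlen : max N M < (X t).length :=
      ht₀.trans_le (prefix_of_le_of_prefix_succ hX htt₀).length_le
    obtain ⟨-, -, hlen', -, hserved⟩ := hstep t (hen_X hN t (by omega))
    rcases hserved with hdis | hmem
    · exact absurd (hen_X hN (t + 1) (by omega)) hdis
    · obtain ⟨i, hi, hie⟩ := List.getElem_of_mem hmem
      rw [List.getElem_drop] at hie
      refine ⟨(X t).length + i, by omega, ?_⟩
      rw [chainLimit_eq_getElem hX hunb (t := t + 1)]
      exact hie
  · obtain ⟨t, ht⟩ := hπ_prefix k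
    exact (hinv t).2 _ ht

end FairChain

section FairRun

variable {E P C : Type*} {Pr : Protocol E P} {col : List E → Set C}

variable (Pr col) in
noncomputable def fairRun (sched : ℕ → E) : ℕ → List E
  | 0 => []
  | t + 1 => fairStep Pr col (fairRun sched t) (sched t)

theorem fairRun_prefix_succ (sched : ℕ → E) (t : ℕ) :
    fairRun Pr col sched t <+: fairRun Pr col sched (t + 1) :=
  prefix_fairStep Pr col _ _

theorem fairRun_mem_runs_undecided (sched : ℕ → E) (hnil : [] ∈ Pr.runs)
    (h0 : Undecided col []) :
    ∀ t, fairRun Pr col sched t ∈ Pr.runs ∧ Undecided col (fairRun Pr col sched t)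
  | 0 => ⟨hnil, h0⟩
  | t + 1 =>
    have ih := fairRun_mem_runs_undecided sched hnil h0 t
    fairStep_mem_runs_undecided _ ih.1 ih.2

end FairRun

theorem IoD.exists_undecided_fairSeq {E P C : Type*} [Countable E] {Pr : Protocol E P}
    {col : List E → Set C} (hcol : IsColoring Pr col) (hIoD : IoD Pr col)
    (hpoly : Polychromatic col []) :
    (∃ x, FinFairSeq Pr x ∧ Undecided col x) ∨
      ∃ π : ℕ → E, InfFairSeq Pr π ∧ ∀ k, ¬ Monochromatic col (prefixList π k) := by
  have : Nonempty C := ⟨hpoly.choose⟩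
  have hnil := hcol.nil_mem_runs
  have h0 := hcol.undecided_of_polychromatic hnil hpoly
  cases isEmpty_or_nonempty E
  · exact Or.inl ⟨[], ⟨hnil, fun e => isEmptyElim e⟩, h0⟩
  obtain ⟨sched, hsched⟩ := exists_seq_forall_exists_ge_eq E
  have hinv := fairRun_mem_runs_undecided (Pr := Pr) sched hnil h0
  have hstep t (he : Pr.Enabled (fairRun Pr col sched t) (sched t)) :=
    hIoD.fairStep_spec hcol (hinv t).1 (hinv t).2 he
  by_cases hlive : ∀ t, ∃ e, Pr.Enabled (fairRun Pr col sched t) e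
  · have hunb := length_unbounded_of_fairStep (fairRun_prefix_succ sched) hstep hsched hlive
    exact Or.inr ⟨_, infFairSeq_chainLimit (fairRun_prefix_succ sched) hinv hstep hsched hunb⟩
  · push Not at hlive
    obtain ⟨t, hdead⟩ := hlive
    exact Or.inl ⟨_, ⟨(hinv t).1, hdead⟩, (hinv t).2⟩

theorem iod_no_decision_general
    {E P C : Type*} [Fintype E] (Pr : Protocol E P)
    (col : List E → Set C) (hcol : IsColoring Pr col) (hIoD : IoD Pr col)
    (hpoly : Polychromatic col ([] : List E)) :
    ((∃ x : List E, FinFairSeq Pr x ∧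
        ∀ p : List E, p <+: x → ¬ Monochromatic col p) ∨
     (∃ π : ℕ → E, InfFairSeq Pr π ∧
        ∀ k : ℕ, ¬ Monochromatic col (prefixList π k))) ∧
    ¬ DecisionProtocol Pr col := by
  have hfair := hIoD.exists_undecided_fairSeq hcol hpoly
  refine ⟨hfair, fun ⟨hdecide_fin, hdecide_inf⟩ => ?_⟩
  rcases hfair with ⟨x, hx, hund⟩ | ⟨π, hπ, hund⟩
  · obtain ⟨p, hp, hmono⟩ := hdecide_fin x hx
    exact hund p hp hmono
  · obtain ⟨k, hmono⟩ := hdecide_inf π hπ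
    exact hund k hmono

/-- Any protocol with a `C`-chromatic coloring satisfying
IoD whose empty run is polychromatic has a fair sequence no finite prefix of
which is monochromatic; in particular it is not a decision protocol. -/
theorem iod_no_decision
    {E P C : Type*} [Fintype E] (Pr : Protocol E P)
    (col : List E → Set C) (hcol : IsColoring Pr col) (hIoD : IoD Pr col)
    (hnil : ([] : List E) ∈ Pr.runs) (hpoly : Polychromatic col ([] : List E)) :
    ((∃ x : List E, FinFairSeq Pr x ∧
        ∀ p : List E, p <+: x → ¬ Monochromatic col p) ∨
     (∃ π : ℕ → E, InfFairSeq Pr π ∧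
        ∀ k : ℕ, ¬ Monochromatic col (prefixList π k))) ∧
    ¬ DecisionProtocol Pr col :=
  iod_no_decision_general Pr col hcol hIoD hpoly
end

section
/- Every resilient consensus protocol satisfies Independence of Decisions (IoD). That is, if a protocol with a C-chromatic coloring has the property that every event is associated with exactly one principal (each event is a message annotated with its intended recipient process), and the protocol satisfies the resiliency property (Res), then it satisfies IoD. -/
/-- The resiliency property `Res`: for each run `x` and each principal `i`
there is a monochromatic run extending `x` that is equivalent to `x` with
respect to `{i}` (i.e. that involves no further events seen by `i`). -/
def Resilient {E P C : Type*} (Pr : Protocol E P)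
    (col : List E → Set C) : Prop :=
  ∀ x ∈ Pr.runs, ∀ i : P, ∃ y ∈ Pr.runs,
    x <+: y ∧ Monochromatic col y ∧ RunEquiv Pr.prin {i} x y

/-!
Let `i` be the principal of `e`. By `P2`, `e` can be appended to any run `z` that includes `x`
and agrees with it on what `i` has seen, and by `C3` the color of `z·e` then lies in
`col z ∩ col (x·e)`. `Res` for `i`, applied at `x` if `e'` is also an event of `i` and at `x·e'`
otherwise, gives such a `z` that is monochromatic, necessarily of color `c`. In the first
case `z·e'` and `z·e'·e` play the same role for `x·e'` and `x·e'·e`; in the second, `x·e'·e`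
includes `x·e` because `i` does not see `e'`.
-/

open Classical in
theorem restrictRun_append_singleton {E P : Type*} (prin : E → Set P) (Q : Set P)
    (x : List E) (e : E) :
    restrictRun prin Q (x ++ [e]) =
      restrictRun prin Q x ++ if (prin e ∩ Q).Nonempty then [e] else [] := by
  unfold restrictRun
  rw [List.filter_append]
  by_cases h : (prin e ∩ Q).Nonempty <;> simp [h]

theorem restrictRun_restrictRun_of_subset {E P : Type*} (prin : E → Set P) {Q Q' : Set P}
    (h : Q' ⊆ Q) (x : List E) :
    restrictRun prin Q' (restrictRun prin Q x) = restrictRun prin Q' x := by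
  unfold restrictRun
  rw [List.filter_filter]
  congr 1
  funext e
  by_cases h' : (prin e ∩ Q').Nonempty
  · simp [h', h'.mono (Set.inter_subset_inter_right _ h)]
  · simp [h']

theorem RunEquiv.mono {E P : Type*} {prin : E → Set P} {Q Q' : Set P} {x y : List E}
    (hxy : RunEquiv prin Q x y) (h : Q' ⊆ Q) : RunEquiv prin Q' x y := by
  unfold RunEquiv at hxy ⊢
  rw [← restrictRun_restrictRun_of_subset prin h x, hxy,
    restrictRun_restrictRun_of_subset prin h]

theorem RunEquiv.append_singleton {E P : Type*} {prin : E → Set P} {Q : Set P} {x y : List E}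
    (hxy : RunEquiv prin Q x y) (e : E) : RunEquiv prin Q (x ++ [e]) (y ++ [e]) := by
  unfold RunEquiv at hxy ⊢
  rw [restrictRun_append_singleton, restrictRun_append_singleton, hxy]

theorem runEquiv_append_singleton_self {E P : Type*} {prin : E → Set P} {Q : Set P}
    (x : List E) {e : E} (he : ¬ (prin e ∩ Q).Nonempty) : RunEquiv prin Q (x ++ [e]) x := by
  simp [RunEquiv, restrictRun_append_singleton, he]

theorem RunIncludes.of_prefix {E P : Type*} (prin : E → Set P) {x y : List E} (h : x <+: y) :
    RunIncludes prin x y :=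
  fun _ => h.filter _

theorem RunIncludes.append_singleton {E P : Type*} {prin : E → Set P} {x y : List E} {e : E}
    (hxy : RunIncludes prin x y) (hequiv : RunEquiv prin (prin e) x y) :
    RunIncludes prin (x ++ [e]) (y ++ [e]) := by
  intro p
  by_cases hp : p ∈ prin e
  · have hequiv_p : RunEquiv prin {p} (x ++ [e]) (y ++ [e]) :=
      (hequiv.mono (Set.singleton_subset_iff.mpr hp)).append_singleton e
    rw [hequiv_p]
  · have hp' : ¬ (prin e ∩ {p}).Nonempty := by rwa [Set.inter_singleton_nonempty]
    simpa [restrictRun_append_singleton, hp'] using hxy p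

/-- Condition `C3` of a coloring. -/
def ColorAntitone {E P C : Type*} (Pr : Protocol E P) (col : List E → Set C) : Prop :=
  ∀ x ∈ Pr.runs, ∀ y ∈ Pr.runs, RunIncludes Pr.prin x y → col y ⊆ col x

namespace Protocol

variable {E P C : Type*} {Pr : Protocol E P} {col : List E → Set C}

theorem color_nonempty_of_resilient [Nonempty P] (hmono : ColorAntitone Pr col)
    (hres : Resilient Pr col) {x : List E} (hx : x ∈ Pr.runs) : (col x).Nonempty := by
  obtain ⟨y, hy, hxy, ⟨d, hd⟩, -⟩ := hres x hx (Classical.arbitrary P)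
  exact ⟨d, hmono x hx y hy (.of_prefix Pr.prin hxy) (hd ▸ rfl)⟩

/-- The run `z·e` exists by `P2`; its color lies in `col z ⊆ {d}` and in `col (x·e)`. -/
theorem mem_color_append_of_runEquiv (hmono : ColorAntitone Pr col)
    (hnonempty : ∀ x ∈ Pr.runs, (col x).Nonempty) {x z : List E} {e : E} {d : C}
    (hxe : x ++ [e] ∈ Pr.runs) (hz : z ∈ Pr.runs) (hxz : RunIncludes Pr.prin x z)
    (hequiv : RunEquiv Pr.prin (Pr.prin e) x z) (hd : col z ⊆ {d}) : d ∈ col (x ++ [e]) := by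
  have hze : z ++ [e] ∈ Pr.runs := Pr.p2 x z e hxe hz hxz hequiv
  obtain ⟨k, hk⟩ := hnonempty _ hze
  obtain rfl : k = d := hd (hmono z hz _ hze (.of_prefix Pr.prin (List.prefix_append z [e])) hk)
  exact hmono _ hxe _ hze (hxz.append_singleton hequiv) hk

theorem iod_of_runEquiv (hmono : ColorAntitone Pr col)
    (hnonempty : ∀ x ∈ Pr.runs, (col x).Nonempty) {x z : List E} {e e' : E} {c d : C}
    (hxe : x ++ [e] ∈ Pr.runs) (hc : col (x ++ [e]) = {c}) (hxe' : x ++ [e'] ∈ Pr.runs)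
    (hz : z ∈ Pr.runs) (hxz : x <+: z) (hd : col z = {d})
    (hequiv : RunEquiv Pr.prin (Pr.prin e) x z) (hequiv' : RunEquiv Pr.prin (Pr.prin e') x z) :
    c ∈ col (x ++ [e']) ∧
      (x ++ [e'] ++ [e] ∈ Pr.runs → ∀ d', col (x ++ [e'] ++ [e]) = {d'} → d' = c) := by
  have hxz := RunIncludes.of_prefix Pr.prin hxz
  obtain rfl : d = c :=
    Set.mem_singleton_iff.mp
      (hc ▸ mem_color_append_of_runEquiv hmono hnonempty hxe hz hxz hequiv hd.le)
  refine ⟨mem_color_append_of_runEquiv hmono hnonempty hxe' hz hxz hequiv' hd.le,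
    fun hxe'e d' hd' => ?_⟩
  have hze' : z ++ [e'] ∈ Pr.runs := Pr.p2 x z e' hxe' hz hxz hequiv'
  have hze'_color : col (z ++ [e']) ⊆ {d} :=
    hd ▸ hmono z hz _ hze' (.of_prefix Pr.prin (List.prefix_append z [e']))
  exact (hd' ▸ mem_color_append_of_runEquiv hmono hnonempty hxe'e hze'
    (hxz.append_singleton hequiv') (hequiv.append_singleton e') hze'_color :).symm

theorem iod_of_not_inter_nonempty (hmono : ColorAntitone Pr col)
    (hnonempty : ∀ x ∈ Pr.runs, (col x).Nonempty) {x z : List E} {e e' : E} {c d : C}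
    (hxe : x ++ [e] ∈ Pr.runs) (hc : col (x ++ [e]) = {c}) (hxe' : x ++ [e'] ∈ Pr.runs)
    (hz : z ∈ Pr.runs) (hx'z : x ++ [e'] <+: z) (hd : col z = {d})
    (hequiv : RunEquiv Pr.prin (Pr.prin e) (x ++ [e']) z)
    (hdisj : ¬ (Pr.prin e' ∩ Pr.prin e).Nonempty) :
    c ∈ col (x ++ [e']) ∧
      (x ++ [e'] ++ [e] ∈ Pr.runs → ∀ d', col (x ++ [e'] ++ [e]) = {d'} → d' = c) := by
  have hx'x : RunEquiv Pr.prin (Pr.prin e) (x ++ [e']) x := runEquiv_append_singleton_self x hdisj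
  have hxz := RunIncludes.of_prefix Pr.prin ((List.prefix_append x [e']).trans hx'z)
  obtain rfl : d = c := Set.mem_singleton_iff.mp
    (hc ▸ mem_color_append_of_runEquiv hmono hnonempty hxe hz hxz (hx'x.symm.trans hequiv) hd.le)
  refine ⟨hmono _ hxe' z hz (.of_prefix Pr.prin hx'z) (hd ▸ rfl), fun hxe'e d' hd' => ?_⟩
  have hincl : RunIncludes Pr.prin (x ++ [e]) (x ++ [e'] ++ [e]) :=
    (RunIncludes.of_prefix Pr.prin (List.prefix_append x [e'])).append_singleton hx'x.symm
  exact Set.mem_singleton_iff.mp (hc ▸ hmono _ hxe _ hxe'e hincl (hd' ▸ rfl))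

end Protocol

theorem resilient_consensus_satisfies_iod_general
    {E P C : Type*} (Pr : Protocol E P)
    (col : List E → Set C) (hcol : IsColoring Pr col)
    (hsingle : ∀ e : E, ∃ p : P, Pr.prin e = {p})
    (hres : Resilient Pr col) :
    IoD Pr col := by
  intro x hx _ e he c hc e' _ he'
  obtain ⟨i, hi⟩ := hsingle e
  have : Nonempty P := ⟨i⟩
  have hmono : ColorAntitone Pr col := hcol.2.2
  have hnonempty := fun y (hy : y ∈ Pr.runs) => Pr.color_nonempty_of_resilient hmono hres hy
  by_cases hie' : i ∈ Pr.prin e'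
  · obtain ⟨j, hj⟩ := hsingle e'
    obtain rfl : i = j := by simpa [hj] using hie'
    obtain ⟨z, hz, hxz, ⟨d, hd⟩, hequiv⟩ := hres x hx i
    exact Protocol.iod_of_runEquiv hmono hnonempty he hc he' hz hxz hd (hi ▸ hequiv)
      (hj ▸ hequiv)
  · obtain ⟨z, hz, hx'z, ⟨d, hd⟩, hequiv⟩ := hres (x ++ [e']) he' i
    exact Protocol.iod_of_not_inter_nonempty hmono hnonempty he hc he' hz hx'z hd (hi ▸ hequiv)
      (by rwa [hi, Set.inter_singleton_nonempty])

/-- Every resilient consensus protocol — a protocol with a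
`C`-chromatic coloring in which every event's principal set is a singleton
and which satisfies `Res` — satisfies Independence of Decisions. -/
theorem resilient_consensus_satisfies_iod
    {E P C : Type*} [Fintype E] (Pr : Protocol E P)
    (col : List E → Set C) (hcol : IsColoring Pr col)
    (hsingle : ∀ e : E, ∃ p : P, Pr.prin e = {p})
    (hres : Resilient Pr col) :
    IoD Pr col :=
  resilient_consensus_satisfies_iod_general Pr col hcol hsingle hres
end
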